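/- arXiv:1305.5725 — 7 statements merged into one kernel-verified Lean document; each statement's English description precedes it below -/
import Mathlib

section
/- Let (ε_k) be a sequence of positive reals tending to 0 and for each k let u^{ε_k} be a stationary measure for the self-stabilizing diffusion at noise intensity ε_k. If ∫_ℝ x^{2n} u^{ε_k}(x) dx → +∞ as k → ∞, then Υ_{ε_k}(u^{ε_k}) → +∞ as k → ∞. -/
open MeasureTheory Real Filter Topology

/-- Convolution `(F ∗ u)(x) = ∫ F(x-y) u(y) dy`. -/
noncomputable def interConv (F u : ℝ → ℝ) (x : ℝ) : ℝ := ∫ y : ℝ, F (x - y) * u y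

/-- A probability density on `ℝ`. -/
def IsProbDensity (u : ℝ → ℝ) : Prop :=
  Measurable u ∧ (∀ x, 0 ≤ u x) ∧ (∫ x : ℝ, u x) = 1

/-- All moments of `u` are finite. -/
def HasAllMoments (u : ℝ → ℝ) : Prop :=
  ∀ N : ℕ, Integrable (fun x : ℝ => |x| ^ N * u x)

/-- The free energy `Υ_ε(u)`. -/
noncomputable def freeEnergy (V F : ℝ → ℝ) (ε : ℝ) (u : ℝ → ℝ) : ℝ :=
  ε / 2 * (∫ x : ℝ, u x * Real.log (u x)) + (∫ x : ℝ, V x * u x)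
    + 1 / 2 * (∫ x : ℝ, ∫ y : ℝ, F (x - y) * u x * u y)

/-- A stationary measure of the self-stabilizing diffusion: a probability density with
finite moments of all orders satisfying the Gibbs fixed-point equation. -/
def IsStationarySSD (V F : ℝ → ℝ) (ε : ℝ) (u : ℝ → ℝ) : Prop :=
  IsProbDensity u ∧ HasAllMoments u ∧
    ∀ x : ℝ, u x =
      (∫ y : ℝ, Real.exp (-(2 / ε) * (V y + interConv F u y)))⁻¹ *
        Real.exp (-(2 / ε) * (V x + interConv F u x))

/-- A symmetric density. -/
def IsSymmetric (u : ℝ → ℝ) : Prop := ∀ x, u (-x) = u x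

/-!
The free energy is coercive in the moments of `u`, uniformly in `ε ≤ 1`. Gibbs' inequality
against the Gaussian `exp (-x²)` bounds the entropy below by `1 - √π - ∫ x² u`, and this loss is
absorbed by the quartic growth of `V`. Jensen's inequality (a tangent line of the convex `F`)
gives `F (x - mean u) ≤ (F ∗ u) x`, so the interaction energy dominates `∫ F (x - mean u) u x`,
hence the centred `2n`-th moment, because an even convex polynomial of degree `2n` vanishing at
`0` is at least `c z^(2n) - K` with `c > 0`. Thus `Υ_ε(u)` grows at least linearly in the fourth
plus the centred `2n`-th moment, and these two control the `2n`-th moment polynomially.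
-/

open Polynomial Set

lemma exists_mul_pow_sub_le_of_even {f : ℝ → ℝ} {c : ℝ} {k : ℕ} (hk : Even k) (hc : 0 ≤ c)
    (hf0 : ∀ x, 0 ≤ f x) (hfeven : ∀ x, f (-x) = f x) (hf : ∀ᶠ x in atTop, c * x ^ k ≤ f x) :
    ∃ C, ∀ x, c * x ^ k - C ≤ f x := by
  obtain ⟨M, hM⟩ := eventually_atTop.1 hf
  refine ⟨c * M ^ k, fun x => ?_⟩
  have hfabs : f |x| = f x := by rcases abs_choice x with h | h <;> simp only [h, hfeven]
  rw [← hk.pow_abs, ← hfabs]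
  rcases le_total M |x| with h | h
  · linarith [hM _ h, mul_nonneg hc (hk.pow_nonneg M)]
  · linarith [hf0 |x|, mul_le_mul_of_nonneg_left (pow_le_pow_left₀ (abs_nonneg x) h k) hc]

namespace Polynomial

lemma leadingCoeff_nonneg_of_forall_eval_nonneg {P : ℝ[X]} (h : ∀ x, 0 ≤ P.eval x) :
    0 ≤ P.leadingCoeff := by
  by_contra! hneg
  rcases le_or_gt P.degree 0 with hdeg | hdeg
  · rw [leadingCoeff, natDegree_eq_zero_iff_degree_le_zero.2 hdeg, coeff_zero_eq_eval_zero] at hneg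
    exact (h 0).not_gt hneg
  · obtain ⟨x, hx⟩ := ((P.tendsto_atBot_of_leadingCoeff_nonpos hdeg hneg.le).eventually
      (eventually_lt_atBot 0)).exists
    exact (h x).not_gt hx

lemma eventually_half_leadingCoeff_mul_pow_le_eval {P : ℝ[X]} (hP : 0 ≤ P.leadingCoeff) :
    ∀ᶠ x in atTop, P.leadingCoeff / 2 * x ^ P.natDegree ≤ P.eval x := by
  filter_upwards [P.isEquivalent_atTop_lead.isLittleO.bound (half_pos one_pos),
    eventually_ge_atTop 0] with x hx hx0
  have hlead : 0 ≤ P.leadingCoeff * x ^ P.natDegree := mul_nonneg hP (pow_nonneg hx0 _)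
  rw [Pi.sub_apply, Real.norm_eq_abs, Real.norm_eq_abs, abs_of_nonneg hlead] at hx
  linarith [neg_abs_le (P.eval x - P.leadingCoeff * x ^ P.natDegree)]

lemma exists_pos_mul_pow_sub_le_eval {q : ℝ[X]} {n : ℕ} (hn : 1 ≤ n)
    (hdeg : q.natDegree = 2 * n) (hq0 : ∀ x, 0 ≤ q.eval x) (hqeven : ∀ x, q.eval (-x) = q.eval x) :
    ∃ c > 0, ∃ C, ∀ x, c * x ^ (2 * n) - C ≤ q.eval x := by
  have hq : q ≠ 0 := by rintro rfl; simp at hdeg; omega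
  have hlead : 0 < q.leadingCoeff :=
    (leadingCoeff_nonneg_of_forall_eval_nonneg hq0).lt_of_ne' (leadingCoeff_ne_zero.2 hq)
  refine ⟨q.leadingCoeff / 2, by positivity, ?_⟩
  exact exists_mul_pow_sub_le_of_even (even_two_mul n) (by positivity) hq0 hqeven
    (hdeg ▸ eventually_half_leadingCoeff_mul_pow_le_eval hlead.le)

end Polynomial

lemma ConvexOn.nonneg_of_even {f : ℝ → ℝ} (hf : ConvexOn ℝ univ f) (hfeven : ∀ x, f (-x) = f x)
    (hf0 : f 0 = 0) (x : ℝ) : 0 ≤ f x := by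
  have := hf.2 (mem_univ x) (mem_univ (-x)) (by norm_num : (0 : ℝ) ≤ 1 / 2)
    (by norm_num : (0 : ℝ) ≤ 1 / 2) (by norm_num)
  simp only [smul_eq_mul, hfeven] at this
  rw [show 1 / 2 * x + 1 / 2 * -x = (0 : ℝ) by ring, hf0] at this
  linarith

lemma ConvexOn.add_deriv_mul_sub_le {f : ℝ → ℝ} (hf : ConvexOn ℝ univ f) {x : ℝ}
    (hfd : DifferentiableAt ℝ f x) (y : ℝ) : f x + deriv f x * (y - x) ≤ f y := by
  rcases lt_trichotomy x y with h | rfl | h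
  · have := hf.deriv_le_slope (mem_univ x) (mem_univ y) h hfd
    rw [slope_def_field, le_div_iff₀ (sub_pos.2 h)] at this
    linarith
  · simp
  · have := hf.slope_le_deriv (mem_univ y) (mem_univ x) h hfd
    rw [slope_def_field, div_le_iff₀ (sub_pos.2 h)] at this
    linarith

noncomputable def moment (u : ℝ → ℝ) (k : ℕ) : ℝ := ∫ x, x ^ k * u x

noncomputable def centralMoment (u : ℝ → ℝ) (k : ℕ) : ℝ := ∫ x, (x - moment u 1) ^ k * u x

section Density

variable {u : ℝ → ℝ}

lemma HasAllMoments.integrable_pow_mul (hmom : HasAllMoments u) (hmeas : Measurable u)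
    (h0 : ∀ x, 0 ≤ u x) (k : ℕ) : Integrable fun x => x ^ k * u x := by
  refine (hmom k).mono' ((continuous_pow k).measurable.mul hmeas).aestronglyMeasurable ?_
  filter_upwards with x
  rw [norm_mul, norm_pow, Real.norm_eq_abs, Real.norm_eq_abs, abs_of_nonneg (h0 x)]

lemma HasAllMoments.integrable_eval_mul (hmom : HasAllMoments u) (hmeas : Measurable u)
    (h0 : ∀ x, 0 ≤ u x) (P : ℝ[X]) : Integrable fun x => P.eval x * u x := by
  simp_rw [eval_eq_sum_range, Finset.sum_mul, mul_assoc]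
  exact integrable_finsetSum _ fun k _ => (hmom.integrable_pow_mul hmeas h0 k).const_mul _

lemma IsProbDensity.integrable (hu : IsProbDensity u) : Integrable u := by
  by_contra h
  simpa [integral_undef h] using hu.2.2

lemma IsProbDensity.moment_nonneg (hu : IsProbDensity u) {k : ℕ} (hk : Even k) :
    0 ≤ moment u k :=
  integral_nonneg fun x => mul_nonneg (hk.pow_nonneg x) (hu.2.1 x)

lemma IsProbDensity.centralMoment_nonneg (hu : IsProbDensity u) {k : ℕ} (hk : Even k) :
    0 ≤ centralMoment u k :=
  integral_nonneg fun x => mul_nonneg (hk.pow_nonneg _) (hu.2.1 x)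

lemma mul_log_add_sub_le_mul_log {s t : ℝ} (hs : 0 < s) (ht : 0 ≤ t) :
    t * log s + t - s ≤ t * log t := by
  rcases ht.eq_or_lt with rfl | ht
  · simpa using hs.le
  · have := mul_le_mul_of_nonneg_left (log_le_sub_one_of_pos (div_pos hs ht)) ht.le
    rw [log_div hs.ne' ht.ne', mul_sub_one, mul_div_cancel₀ _ ht.ne'] at this
    linarith

lemma IsProbDensity.integral_mul_log_ge (hu : IsProbDensity u) (hmom : HasAllMoments u) :
    1 - √π - moment u 2 ≤ ∫ x, u x * log (u x) := by
  have hu1 := hu.integrable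
  have hm2pos := hu.moment_nonneg (k := 2) even_two
  obtain ⟨hmeas, h0, h1⟩ := hu
  have hgauss : Integrable fun x : ℝ => exp (-x ^ 2) := by
    simpa using integrable_exp_neg_mul_sq one_pos
  have hm2 := hmom.integrable_pow_mul hmeas h0 2
  have hdiff : Integrable fun x => u x - x ^ 2 * u x := hu1.sub hm2
  have hint : Integrable fun x => u x - x ^ 2 * u x - exp (-x ^ 2) := hdiff.sub hgauss
  have hval : ∫ x, u x - x ^ 2 * u x - exp (-x ^ 2) = 1 - √π - moment u 2 := by
    have hπ : ∫ x : ℝ, exp (-x ^ 2) = √π := by simpa using integral_gaussian 1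
    rw [integral_sub hdiff hgauss, integral_sub hu1 hm2, h1, hπ, moment]
    ring
  by_cases hI : Integrable fun x => u x * log (u x)
  · refine hval ▸ integral_mono hint hI fun x => ?_
    have := mul_log_add_sub_le_mul_log (exp_pos (-x ^ 2)) (h0 x)
    rw [log_exp] at this
    linarith
  · rw [integral_undef hI]
    have hπ : 1 ≤ √π := Real.one_le_sqrt.2 (by linarith [pi_gt_three])
    linarith

end Density

section Interaction

variable {u : ℝ → ℝ}

lemma ConvexOn.le_interConv {F : ℝ → ℝ} (hF : ConvexOn ℝ univ F) (hFd : Differentiable ℝ F)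
    (hu : IsProbDensity u) (h1 : Integrable fun y => y * u y) {x : ℝ}
    (hx : Integrable fun y => F (x - y) * u y) : F (x - moment u 1) ≤ interConv F u x := by
  set c := deriv F (x - moment u 1)
  have htangent : Integrable fun y => (F (x - moment u 1) + c * moment u 1) * u y - c * (y * u y) :=
    (hu.integrable.const_mul _).sub (h1.const_mul _)
  have hle := integral_mono htangent hx fun y => by
    have := hF.add_deriv_mul_sub_le (hFd (x - moment u 1)) (x - y)
    nlinarith [hu.2.1 y]
  rwa [integral_sub (hu.integrable.const_mul _) (h1.const_mul _), integral_const_mul,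
    integral_const_mul, hu.2.2, show ∫ y, y * u y = moment u 1 by simp [moment], mul_one,
    add_sub_cancel_right] at hle

lemma HasAllMoments.integrable_interaction (hmom : HasAllMoments u) (hmeas : Measurable u)
    (h0 : ∀ x, 0 ≤ u x) {q : ℝ[X]} (hconv : ConvexOn ℝ univ fun x => q.eval x)
    (hq0 : ∀ x, 0 ≤ q.eval x) :
    Integrable (fun z : ℝ × ℝ => q.eval (z.1 - z.2) * u z.1 * u z.2) (volume.prod volume) := by
  have hu1 : Integrable u := by simpa using hmom 0
  have h2 := hmom.integrable_eval_mul hmeas h0 (q.comp (C 2 * X))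
  have h2' := hmom.integrable_eval_mul hmeas h0 (q.comp (-(C 2 * X)))
  simp only [eval_comp, eval_mul, eval_neg, eval_C, eval_X] at h2 h2'
  refine (((h2.mul_prod hu1).add (hu1.mul_prod h2')).div_const 2).mono'
    (((q.continuous.measurable.comp (measurable_fst.sub measurable_snd)).mul
      (hmeas.comp measurable_fst)).mul (hmeas.comp measurable_snd)).aestronglyMeasurable
    (ae_of_all _ fun z => ?_)
  -- convexity: `q (x - y) ≤ (q (2x) + q (-2y)) / 2`, a sum of products of `u`-integrable functions
  have hmid := hconv.2 (mem_univ (2 * z.1)) (mem_univ (-(2 * z.2)))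
    (by norm_num : (0 : ℝ) ≤ 1 / 2) (by norm_num : (0 : ℝ) ≤ 1 / 2) (by norm_num)
  simp only [smul_eq_mul] at hmid
  rw [show 1 / 2 * (2 * z.1) + 1 / 2 * -(2 * z.2) = z.1 - z.2 by ring] at hmid
  have huu := mul_nonneg (h0 z.1) (h0 z.2)
  rw [Real.norm_eq_abs, abs_of_nonneg (mul_nonneg (mul_nonneg (hq0 _) (h0 _)) (h0 _)),
    Pi.add_apply]
  nlinarith

lemma HasAllMoments.integral_eval_sub_moment_mul_le (hmom : HasAllMoments u)
    (hu : IsProbDensity u) {q : ℝ[X]} (hconv : ConvexOn ℝ univ fun x => q.eval x)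
    (hq0 : ∀ x, 0 ≤ q.eval x) :
    ∫ x, q.eval (x - moment u 1) * u x ≤ ∫ x, ∫ y, q.eval (x - y) * u x * u y := by
  have hmean := hmom.integrable_eval_mul hu.1 hu.2.1 (q.comp (X - C (moment u 1)))
  simp only [eval_comp, eval_sub, eval_C, eval_X] at hmean
  refine integral_mono hmean (hmom.integrable_interaction hu.1 hu.2.1 hconv hq0).integral_prod_left
    fun x => ?_
  have h1 : Integrable fun y => y * u y := by
    simpa using hmom.integrable_pow_mul hu.1 hu.2.1 1
  have hx := hmom.integrable_eval_mul hu.1 hu.2.1 (q.comp (C x - X))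
  simp only [eval_comp, eval_sub, eval_C, eval_X] at hx
  have hjensen := hconv.le_interConv q.differentiable hu h1 hx
  calc q.eval (x - moment u 1) * u x ≤ interConv (fun x => q.eval x) u x * u x :=
        mul_le_mul_of_nonneg_right hjensen (hu.2.1 x)
    _ = ∫ y, q.eval (x - y) * u x * u y := by
        rw [interConv, ← integral_mul_const]
        exact integral_congr_ae (ae_of_all _ fun y => by ring)

end Interaction

section Moments

variable {u : ℝ → ℝ}

lemma HasAllMoments.abs_moment_one_le (hmom : HasAllMoments u) (hu : IsProbDensity u) :
    |moment u 1| ≤ 1 + moment u 4 := by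
  have hbound : Integrable fun x => u x + x ^ 4 * u x :=
    hu.integrable.add (hmom.integrable_pow_mul hu.1 hu.2.1 4)
  have hle := norm_integral_le_of_norm_le hbound (ae_of_all _ fun x => show ‖x ^ 1 * u x‖ ≤ _ by
    rw [norm_mul, Real.norm_eq_abs, Real.norm_eq_abs, pow_one, abs_of_nonneg (hu.2.1 x)]
    have : |x| ≤ 1 + x ^ 4 := abs_le.2
      ⟨by nlinarith [sq_nonneg (x ^ 2 - 1 / 2), sq_nonneg (x + 1 / 2)],
        by nlinarith [sq_nonneg (x ^ 2 - 1 / 2), sq_nonneg (x - 1 / 2)]⟩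
    nlinarith [hu.2.1 x])
  rwa [integral_add hu.integrable (hmom.integrable_pow_mul hu.1 hu.2.1 4), hu.2.2] at hle

lemma HasAllMoments.moment_le_centralMoment_add (hmom : HasAllMoments u) (hu : IsProbDensity u)
    {k : ℕ} (hk : Even k) :
    moment u k ≤ 2 ^ (k - 1) * (centralMoment u k + |moment u 1| ^ k) := by
  set μ := moment u 1
  have hcentral := hmom.integrable_eval_mul hu.1 hu.2.1 ((X - C μ) ^ k)
  simp only [eval_pow, eval_sub, eval_X, eval_C] at hcentral
  have hbound :
      Integrable fun x => 2 ^ (k - 1) * ((x - μ) ^ k * u x) + 2 ^ (k - 1) * |μ| ^ k * u x :=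
    (hcentral.const_mul _).add (hu.integrable.const_mul _)
  have hle := integral_mono (hmom.integrable_pow_mul hu.1 hu.2.1 k) hbound fun x => by
    have htri : |x| ^ k ≤ (|x - μ| + |μ|) ^ k :=
      pow_le_pow_left₀ (abs_nonneg x) (by simpa using abs_add_le (x - μ) μ) k
    have hconv := add_pow_le (abs_nonneg (x - μ)) (abs_nonneg μ) k
    rw [hk.pow_abs] at htri
    rw [hk.pow_abs (x - μ)] at hconv
    nlinarith [hu.2.1 x]
  rwa [integral_add (hcentral.const_mul _) (hu.integrable.const_mul _), integral_const_mul,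
    integral_const_mul, hu.2.2, mul_one, ← mul_add] at hle

lemma HasAllMoments.moment_le_two_pow_mul (hmom : HasAllMoments u) (hu : IsProbDensity u)
    {k : ℕ} (hk : Even k) (hk0 : k ≠ 0) :
    moment u k ≤ 2 ^ k * (1 + (moment u 4 + centralMoment u k)) ^ k := by
  have hA := hu.moment_nonneg (k := 4) (by decide)
  have hB := hu.centralMoment_nonneg hk
  have hμ : |moment u 1| ^ k ≤ (1 + (moment u 4 + centralMoment u k)) ^ k :=
    pow_le_pow_left₀ (abs_nonneg _) ((hmom.abs_moment_one_le hu).trans (by linarith)) k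
  have hB' : centralMoment u k ≤ (1 + (moment u 4 + centralMoment u k)) ^ k :=
    (by linarith : centralMoment u k ≤ _).trans (le_self_pow₀ (by linarith) hk0)
  calc moment u k ≤ 2 ^ (k - 1) * (centralMoment u k + |moment u 1| ^ k) :=
        hmom.moment_le_centralMoment_add hu hk
    _ ≤ 2 ^ (k - 1) * (2 * (1 + (moment u 4 + centralMoment u k)) ^ k) := by gcongr; linarith
    _ = 2 ^ k * (1 + (moment u 4 + centralMoment u k)) ^ k := by
        rw [← mul_assoc, ← pow_succ, Nat.sub_add_cancel (Nat.one_le_iff_ne_zero.2 hk0)]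

end Moments

section FreeEnergy

variable {u : ℝ → ℝ}

lemma HasAllMoments.integral_eval_mul_ge (hmom : HasAllMoments u) (hu : IsProbDensity u)
    {p : ℝ[X]} {C₂ C₄ : ℝ} (hC₄ : 0 < C₄) (hp : ∀ x, C₄ * x ^ 4 - C₂ * x ^ 2 ≤ p.eval x) :
    C₄ / 2 * moment u 4 + moment u 2 / 2 - (2 * C₂ + 1) ^ 2 / (8 * C₄) ≤ ∫ x, p.eval x * u x := by
  set K := (2 * C₂ + 1) ^ 2 / (8 * C₄)
  have h4 := hmom.integrable_pow_mul hu.1 hu.2.1 4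
  have h2 := hmom.integrable_pow_mul hu.1 hu.2.1 2
  have h42 : Integrable fun x => C₄ / 2 * (x ^ 4 * u x) + 1 / 2 * (x ^ 2 * u x) :=
    (h4.const_mul _).add (h2.const_mul _)
  have hlower : Integrable fun x => C₄ / 2 * (x ^ 4 * u x) + 1 / 2 * (x ^ 2 * u x) - K * u x :=
    h42.sub (hu.integrable.const_mul K)
  have hle := integral_mono hlower (hmom.integrable_eval_mul hu.1 hu.2.1 p) fun x => by
    have hsq : C₄ / 2 * x ^ 4 - (C₂ + 1 / 2) * x ^ 2 + K
        = C₄ / 2 * (x ^ 2 - (2 * C₂ + 1) / (2 * C₄)) ^ 2 := by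
      simp only [K]; field_simp; ring
    have hpt : C₄ / 2 * x ^ 4 + 1 / 2 * x ^ 2 - K ≤ p.eval x := by
      linarith [hp x, mul_nonneg hC₄.le (sq_nonneg (x ^ 2 - (2 * C₂ + 1) / (2 * C₄)))]
    calc C₄ / 2 * (x ^ 4 * u x) + 1 / 2 * (x ^ 2 * u x) - K * u x
        = (C₄ / 2 * x ^ 4 + 1 / 2 * x ^ 2 - K) * u x := by ring
      _ ≤ p.eval x * u x := mul_le_mul_of_nonneg_right hpt (hu.2.1 x)
  rwa [integral_sub h42 (hu.integrable.const_mul K), integral_add (h4.const_mul _) (h2.const_mul _),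
    integral_const_mul, integral_const_mul, integral_const_mul, hu.2.2, mul_one, ← moment,
    ← moment, one_div_mul_eq_div] at hle

lemma HasAllMoments.mul_centralMoment_sub_le_interaction (hmom : HasAllMoments u)
    (hu : IsProbDensity u) {q : ℝ[X]} (hconv : ConvexOn ℝ univ fun x => q.eval x)
    (hq0 : ∀ x, 0 ≤ q.eval x) {c K : ℝ} {k : ℕ} (hlow : ∀ z, c * z ^ k - K ≤ q.eval z) :
    c * centralMoment u k - K ≤ ∫ x, ∫ y, q.eval (x - y) * u x * u y := by
  have hcentral := hmom.integrable_eval_mul hu.1 hu.2.1 ((X - C (moment u 1)) ^ k)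
  have hmean := hmom.integrable_eval_mul hu.1 hu.2.1 (q.comp (X - C (moment u 1)))
  simp only [eval_pow, eval_comp, eval_sub, eval_X, eval_C] at hcentral hmean
  have hlower : Integrable fun x => c * ((x - moment u 1) ^ k * u x) - K * u x :=
    (hcentral.const_mul c).sub (hu.integrable.const_mul K)
  have hle := integral_mono hlower hmean fun x => by nlinarith [hlow (x - moment u 1), hu.2.1 x]
  rw [integral_sub (hcentral.const_mul c) (hu.integrable.const_mul K), integral_const_mul,
    integral_const_mul, hu.2.2, mul_one] at hle
  exact hle.trans (hmom.integral_eval_sub_moment_mul_le hu hconv hq0)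

lemma HasAllMoments.freeEnergy_ge (hmom : HasAllMoments u) (hu : IsProbDensity u) {ε : ℝ}
    (hε : 0 ≤ ε) (hε1 : ε ≤ 1) {p q : ℝ[X]} {C₂ C₄ c K : ℝ} {k : ℕ} (hk : Even k) (hC₄ : 0 < C₄)
    (hp : ∀ x, C₄ * x ^ 4 - C₂ * x ^ 2 ≤ p.eval x) (hconv : ConvexOn ℝ univ fun x => q.eval x)
    (hq0 : ∀ x, 0 ≤ q.eval x) (hlow : ∀ z, c * z ^ k - K ≤ q.eval z) :
    min C₄ c / 2 * (moment u 4 + centralMoment u k) - ((√π + K) / 2 + (2 * C₂ + 1) ^ 2 / (8 * C₄))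
      ≤ freeEnergy (fun x => p.eval x) (fun x => q.eval x) ε u := by
  have hentropy : -(√π + moment u 2) / 2 ≤ ε / 2 * ∫ x, u x * log (u x) := by
    have := hu.integral_mul_log_ge hmom
    have := hu.moment_nonneg (k := 2) even_two
    rcases le_total 0 (∫ x, u x * log (u x)) with hE | hE
    · nlinarith [sqrt_nonneg π]
    · nlinarith
  have hpotential := hmom.integral_eval_mul_ge hu hC₄ hp
  have hinteraction := hmom.mul_centralMoment_sub_le_interaction hu hconv hq0 hlow
  have hA := mul_le_mul_of_nonneg_right (min_le_left C₄ c) (hu.moment_nonneg (k := 4) (by decide))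
  have hB := mul_le_mul_of_nonneg_right (min_le_right C₄ c) (hu.centralMoment_nonneg hk)
  rw [freeEnergy]
  linarith

end FreeEnergy

lemma tendsto_atTop_of_le_mul_one_add_pow {ι : Type*} {l : Filter ι} {f g : ι → ℝ} {C : ℝ}
    {k : ℕ} (hC : 0 < C) (hk : k ≠ 0) (hg : ∀ i, 0 ≤ g i) (hfg : ∀ i, f i ≤ C * (1 + g i) ^ k)
    (hf : Tendsto f l atTop) : Tendsto g l atTop := by
  refine tendsto_atTop.2 fun R => ?_
  filter_upwards [hf.eventually_ge_atTop (C * (1 + max R 0) ^ k)] with i hi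
  have := le_of_pow_le_pow_left₀ hk (by linarith [hg i])
    (le_of_mul_le_mul_left (hi.trans (hfg i)) hC)
  linarith [le_max_left R 0]

theorem stmt3_general
    (n : ℕ) (hn : 1 ≤ n)
    (V F : ℝ → ℝ) (p q : Polynomial ℝ)
    (hVp : ∀ x, V x = p.eval x)
    (C₂ C₄ : ℝ) (hC₄ : 0 < C₄)
    (hVgrowth : ∀ x, C₄ * x ^ 4 - C₂ * x ^ 2 ≤ V x)
    (hFq : ∀ x, F x = q.eval x) (hFdeg : q.natDegree = 2 * n)
    (hFeven : ∀ x, F (-x) = F x) (hF0 : F 0 = 0)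
    (hFconv : ConvexOn ℝ Set.univ F)
    (ε : ℕ → ℝ) (hεpos : ∀ k, 0 < ε k) (hε0 : Tendsto ε atTop (𝓝 0))
    (u : ℕ → ℝ → ℝ) (hstat : ∀ k, IsStationarySSD V F (ε k) (u k))
    (hmom : Tendsto (fun k => ∫ x : ℝ, x ^ (2 * n) * u k x) atTop atTop) :
    Tendsto (fun k => freeEnergy V F (ε k) (u k)) atTop atTop := by
  obtain rfl : V = fun x => p.eval x := funext hVp
  obtain rfl : F = fun x => q.eval x := funext hFq
  have hq0 := hFconv.nonneg_of_even hFeven hF0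
  obtain ⟨c, hc, K, hlow⟩ := exists_pos_mul_pow_sub_le_eval hn hFdeg hq0 hFeven
  have hS : Tendsto (fun k => moment (u k) 4 + centralMoment (u k) (2 * n)) atTop atTop :=
    tendsto_atTop_of_le_mul_one_add_pow (by positivity) (by omega)
      (fun k => add_nonneg ((hstat k).1.moment_nonneg (by decide))
        ((hstat k).1.centralMoment_nonneg (even_two_mul n)))
      (fun k => (hstat k).2.1.moment_le_two_pow_mul (hstat k).1 (even_two_mul n) (by omega)) hmom
  have hε1 : ∀ᶠ k in atTop, ε k ≤ 1 := hε0.eventually (ge_mem_nhds one_pos)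
  refine tendsto_atTop_mono' _ (hε1.mono fun k hk => (hstat k).2.1.freeEnergy_ge (hstat k).1
    (hεpos k).le hk (even_two_mul n) hC₄ hVgrowth hFconv hq0 hlow) ?_
  simpa only [sub_eq_add_neg] using
    tendsto_atTop_add_const_right _ _ (hS.const_mul_atTop (half_pos (lt_min hC₄ hc)))

theorem stmt3
    (m n : ℕ) (hm : 2 ≤ m) (hn : 1 ≤ n)
    (V F : ℝ → ℝ) (p q : Polynomial ℝ)
    (hVp : ∀ x, V x = p.eval x) (hVdeg : p.natDegree = 2 * m)
    (hVeven : ∀ x, V (-x) = V x) (hV0 : V 0 = 0)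
    (a : ℝ) (ha : 0 < a)
    (hVcrit : ∀ x, deriv V x = 0 ↔ x = -a ∨ x = 0 ∨ x = a)
    (hVa : 0 < deriv (deriv V) a) (hV0'' : deriv (deriv V) 0 < 0)
    (C₂ C₄ : ℝ) (hC₂ : 0 < C₂) (hC₄ : 0 < C₄)
    (hVgrowth : ∀ x, C₄ * x ^ 4 - C₂ * x ^ 2 ≤ V x)
    (hVinfTop : Tendsto (deriv (deriv V)) atTop atTop)
    (hVinfBot : Tendsto (deriv (deriv V)) atBot atTop)
    (hVpos : ∀ x, a ≤ x → 0 < deriv (deriv V) x)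
    (hVconv : ConvexOn ℝ Set.univ (deriv (deriv V)))
    (hFq : ∀ x, F x = q.eval x) (hFdeg : q.natDegree = 2 * n)
    (hFeven : ∀ x, F (-x) = F x) (hF0 : F 0 = 0)
    (hFconv : ConvexOn ℝ Set.univ F)
    (hF''conv : ConvexOn ℝ Set.univ (deriv (deriv F)))
    (ε : ℕ → ℝ) (hεpos : ∀ k, 0 < ε k) (hε0 : Tendsto ε atTop (𝓝 0))
    (u : ℕ → ℝ → ℝ) (hstat : ∀ k, IsStationarySSD V F (ε k) (u k))
    (hmom : Tendsto (fun k => ∫ x : ℝ, x ^ (2 * n) * u k x) atTop atTop) :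
    Tendsto (fun k => freeEnergy V F (ε k) (u k)) atTop atTop :=
  stmt3_general n hn V F p q hVp C₂ C₄ hC₄ hVgrowth hFq hFdeg hFeven hF0 hFconv ε hεpos hε0 u hstat
    hmom
end

section
/- Let V : ℝ → ℝ be measurable with V(x) ≥ C₄x⁴ − C₂x² for all x (C₂, C₄ > 0), let F : ℝ → ℝ be measurable and nonnegative, and let ε > 0. Then there exists a constant C (depending only on C₂, C₄ and ε) such that for every probability density u on ℝ with finite fourth moment, Υ_ε(u) ≥ ∫_ℝ x² u(x) dx − C. -/
open MeasureTheory Real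

/-!
The interaction term is nonnegative. The quartic confinement gives `V x ≥ (1 + ε/2) x² - K`
for a constant `K`, and the Gibbs inequality against the Gaussian weight `exp (-x²)` gives
`∫ u log u ≥ -∫ x² u - √π`. Adding `ε/2` times the second bound to the first leaves
exactly `∫ x² u` minus a constant.
-/

theorem mul_sq_le_mul_pow_four_add {c : ℝ} (hc : 0 < c) (a x : ℝ) :
    a * x ^ 2 ≤ c * x ^ 4 + a ^ 2 / (4 * c) := by
  have key : 4 * c * (a ^ 2 / (4 * c)) = a ^ 2 := by field_simp
  nlinarith [sq_nonneg (2 * c * x ^ 2 - a)]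

theorem le_of_quartic_growth {V : ℝ → ℝ} {C₂ C₄ : ℝ} (hC₄ : 0 < C₄)
    (hV : ∀ x, C₄ * x ^ 4 - C₂ * x ^ 2 ≤ V x) (b x : ℝ) :
    b * x ^ 2 - (b + C₂) ^ 2 / (4 * C₄) ≤ V x := by
  linarith [hV x, mul_sq_le_mul_pow_four_add hC₄ (b + C₂) x]

/-- Young's inequality for the entropy: `exp (b - 1)` is the Legendre transform of `t log t`. -/
theorem mul_sub_mul_log_le_exp_sub_one {t : ℝ} (ht : 0 ≤ t) (b : ℝ) :
    t * b - t * log t ≤ exp (b - 1) := by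
  rcases ht.eq_or_lt with rfl | ht
  · simpa using (exp_pos _).le
  have h := add_one_le_exp (b - 1 - log t)
  rw [exp_sub, exp_log ht] at h
  have : t * (b - 1 - log t + 1) ≤ exp (b - 1) := by
    rw [le_div_iff₀ ht] at h; linarith
  linarith

theorem neg_mul_sub_exp_neg_le_mul_log {t : ℝ} (ht : 0 ≤ t) (s : ℝ) :
    -(s * t) - exp (-s) ≤ t * log t := by
  have := mul_sub_mul_log_le_exp_sub_one ht (1 - s)
  rw [show 1 - s - 1 = -s by ring] at this
  linarith

theorem neg_integral_sub_integral_exp_le_integral_mul_log {α : Type*} [MeasurableSpace α]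
    {μ : Measure α} {u φ : α → ℝ} (hu : ∀ x, 0 ≤ u x) (hφ : ∀ x, 0 ≤ φ x)
    (hφu : Integrable (fun x => φ x * u x) μ) (hexp : Integrable (fun x => exp (-φ x)) μ) :
    -(∫ x, φ x * u x ∂μ) - ∫ x, exp (-φ x) ∂μ ≤ ∫ x, u x * log (u x) ∂μ := by
  by_cases hent : Integrable (fun x => u x * log (u x)) μ
  · rw [← integral_neg, ← integral_sub hφu.fun_neg hexp]
    exact integral_mono (hφu.fun_neg.sub hexp) hent fun x =>
      neg_mul_sub_exp_neg_le_mul_log (hu x) _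
  · -- the junk value `0` of the right-hand side still dominates the left-hand side
    have h₁ : 0 ≤ ∫ x, φ x * u x ∂μ := integral_nonneg fun x => mul_nonneg (hφ x) (hu x)
    have h₂ : 0 ≤ ∫ x, exp (-φ x) ∂μ := integral_nonneg fun x => (exp_pos _).le
    rw [integral_undef hent]
    linarith

theorem mul_integral_sub_mul_integral_le {α : Type*} [MeasurableSpace α] {μ : Measure α}
    {u g V : α → ℝ} {a K : ℝ} (hu : ∀ x, 0 ≤ u x) (hV : ∀ x, a * g x - K ≤ V x)
    (hu_int : Integrable u μ) (hgu : Integrable (fun x => g x * u x) μ)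
    (hVu : Integrable (fun x => V x * u x) μ) :
    a * (∫ x, g x * u x ∂μ) - K * ∫ x, u x ∂μ ≤ ∫ x, V x * u x ∂μ := by
  rw [← integral_const_mul, ← integral_const_mul, ← integral_sub (hgu.const_mul a)
    (hu_int.const_mul K)]
  refine integral_mono ((hgu.const_mul a).sub (hu_int.const_mul K)) hVu fun x => ?_
  have := mul_le_mul_of_nonneg_right (hV x) (hu x)
  linarith

theorem integrable_sq_mul_of_integrable_pow_four_mul {μ : Measure ℝ} {u : ℝ → ℝ}
    (hu : ∀ x, 0 ≤ u x) (hu_int : Integrable u μ)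
    (hx4 : Integrable (fun x => x ^ 4 * u x) μ) :
    Integrable (fun x => x ^ 2 * u x) μ := by
  refine (hu_int.add hx4).mono'
    ((continuous_pow 2).aestronglyMeasurable.mul hu_int.aestronglyMeasurable) ?_
  refine Filter.Eventually.of_forall fun x => ?_
  rw [Real.norm_of_nonneg (mul_nonneg (sq_nonneg x) (hu x)), Pi.add_apply]
  nlinarith [hu x, sq_nonneg (x ^ 2 - 1)]

theorem integral_exp_neg_sq : ∫ x : ℝ, exp (-x ^ 2) = √π := by
  simpa using integral_gaussian 1

theorem stmt8_general
    (V : ℝ → ℝ)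
    (C₂ C₄ : ℝ) (hC₄ : 0 < C₄)
    (hVgrowth : ∀ x, C₄ * x ^ 4 - C₂ * x ^ 2 ≤ V x)
    (F : ℝ → ℝ) (hFpos : ∀ x, 0 ≤ F x)
    (ε : ℝ) (hε : 0 < ε) :
    ∃ C : ℝ, ∀ u : ℝ → ℝ, IsProbDensity u →
      Integrable (fun x : ℝ => x ^ 4 * u x) →
      Integrable (fun x : ℝ => V x * u x) →
      (∫ x : ℝ, x ^ 2 * u x) - C ≤ freeEnergy V F ε u := by
  refine ⟨(1 + ε / 2 + C₂) ^ 2 / (4 * C₄) + ε / 2 * √π, ?_⟩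
  rintro u ⟨-, hu, hu_one⟩ hx4 hVu
  have hu_int : Integrable u := .of_integral_ne_zero (by simp [hu_one])
  have hx2 := integrable_sq_mul_of_integrable_pow_four_mul hu hu_int hx4
  have hpot := mul_integral_sub_mul_integral_le hu
    (le_of_quartic_growth hC₄ hVgrowth (1 + ε / 2)) hu_int hx2 hVu
  have hent := neg_integral_sub_integral_exp_le_integral_mul_log (μ := volume) hu
    (fun x => sq_nonneg x) hx2 (by simpa using integrable_exp_neg_mul_sq one_pos)
  rw [integral_exp_neg_sq] at hent
  have hint : 0 ≤ ∫ x, ∫ y, F (x - y) * u x * u y :=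
    integral_nonneg fun x => integral_nonneg fun y =>
      mul_nonneg (mul_nonneg (hFpos _) (hu x)) (hu y)
  have hent_scaled := mul_le_mul_of_nonneg_left hent (by positivity : 0 ≤ ε / 2)
  rw [hu_one] at hpot
  unfold freeEnergy
  linarith

theorem stmt8
    (V : ℝ → ℝ) (hVmeas : Measurable V)
    (C₂ C₄ : ℝ) (hC₂ : 0 < C₂) (hC₄ : 0 < C₄)
    (hVgrowth : ∀ x, C₄ * x ^ 4 - C₂ * x ^ 2 ≤ V x)
    (F : ℝ → ℝ) (hFmeas : Measurable F) (hFpos : ∀ x, 0 ≤ F x)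
    (ε : ℝ) (hε : 0 < ε) :
    ∃ C : ℝ, ∀ u : ℝ → ℝ, IsProbDensity u →
      Integrable (fun x : ℝ => x ^ 4 * u x) →
      Integrable (fun x : ℝ => V x * u x) →
      (∫ x : ℝ, x ^ 2 * u x) - C ≤ freeEnergy V F ε u :=
  stmt8_general V C₂ C₄ hC₄ hVgrowth F hFpos ε hε
end

section
/- Let V : ℝ → ℝ be measurable, let F : ℝ → ℝ be an even polynomial of degree 2n ≥ 2 with F(0) = 0 such that F and F'' are convex, and let ε > 0. Then for every probability density u on ℝ with finite moments of all orders, Υ_ε(u) ≥ −ε/4 − 4ε e⁻¹ + ∫_ℝ ( V(x) + (F''(0)/2)x² − (ε/4)x² ) u(x) dx − (F''(0)/2) ( ∫_ℝ x u(x) dx )². In particular, if ∫_ℝ x u(x) dx = 0, then Υ_ε(u) ≥ −ε/4 − 4ε e⁻¹ + ∫_ℝ ( V(x) + (F''(0)/2)x² − (ε/4)x² ) u(x) dx. -/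
open MeasureTheory Real

/-! Two pointwise lower bounds, integrated against `u`, give the estimate.

*Entropy.* Young's inequality `s t - e^s ≤ t log t` with `s = -x²/2` gives
`∫ u log u ≥ -½ ∫ x² u - √(2π)`, and `√(2π) ≤ ½ + 8/e`.

*Interaction.* `F''` is even and convex, so it is minimal at `0`; hence
`F(z) - F''(0) z²/2` is even and convex, so it is minimal at `0`, where it vanishes. Thus
`F(z) ≥ F''(0) z²/2`, and `½ ∬ (x - y)² u(x) u(y) = ∫ x² u - (∫ x u)²` for a probability
density `u`. Finite moments make every polynomial in `x - y` integrable against `u ⊗ u`. -/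

theorem Function.Even.deriv {f : ℝ → ℝ} (hf : f.Even) : (deriv f).Odd := fun x => by
  have h := deriv_comp_neg (f := f) (x := -x)
  rwa [show (fun y => f (-y)) = f from funext hf, neg_neg] at h

theorem Function.Odd.deriv {f : ℝ → ℝ} (hf : f.Odd) : (deriv f).Even := fun x => by
  have h := deriv_comp_neg (f := f) (x := x)
  rw [show (fun y => f (-y)) = -f from funext hf, deriv.neg] at h
  linarith

theorem ConvexOn.apply_zero_le_of_even {E : Type*} [AddCommGroup E] [Module ℝ E] {f : E → ℝ}
    (hf : ConvexOn ℝ Set.univ f) (he : f.Even) (x : E) : f 0 ≤ f x := by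
  have h := hf.2 (Set.mem_univ x) (Set.mem_univ (-x)) (by norm_num : (0 : ℝ) ≤ 1 / 2)
    (by norm_num : (0 : ℝ) ≤ 1 / 2) (by norm_num)
  rw [smul_neg, add_neg_cancel, he x, smul_eq_mul] at h
  linarith

theorem add_mul_sq_le_of_even_of_convexOn_deriv_deriv {f : ℝ → ℝ} (hf : Differentiable ℝ f)
    (hf' : Differentiable ℝ (deriv f)) (he : f.Even)
    (hconv : ConvexOn ℝ Set.univ (deriv (deriv f))) (x : ℝ) :
    f 0 + deriv (deriv f) 0 / 2 * x ^ 2 ≤ f x := by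
  set c := deriv (deriv f) 0
  set g := fun x => f x - c / 2 * x ^ 2
  have hg' : deriv g = fun x => deriv f x - c * x := funext fun x =>
    ((hf x).hasDerivAt.sub ((hasDerivAt_pow 2 x).const_mul (c / 2))).deriv.trans (by ring)
  have hg'' : ∀ x, deriv (deriv g) x = deriv (deriv f) x - c := fun x => by
    rw [hg']
    exact ((hf' x).hasDerivAt.sub ((hasDerivAt_id x).const_mul c)).deriv.trans (by ring)
  have hgconv : ConvexOn ℝ Set.univ g := by
    refine convexOn_univ_of_deriv2_nonneg (hf.sub (by fun_prop)) ?_ fun x => ?_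
    · rw [hg']
      exact hf'.sub (by fun_prop)
    · rw [Function.iterate_succ_apply, Function.iterate_one, hg'', sub_nonneg]
      exact hconv.apply_zero_le_of_even he.deriv.deriv x
  have hgeven : g.Even := fun x => by simp only [g, he x, neg_sq]
  have := hgconv.apply_zero_le_of_even hgeven x
  simp only [g] at this
  linarith

theorem mul_sub_exp_le_mul_log (s : ℝ) {t : ℝ} (ht : 0 ≤ t) : s * t - exp s ≤ t * log t := by
  rcases ht.eq_or_lt with rfl | ht
  · simp [(exp_pos s).le]
  · have h := log_le_sub_one_of_pos (div_pos (exp_pos s) ht)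
    rw [log_div (exp_ne_zero s) ht.ne', log_exp, le_sub_iff_add_le, le_div_iff₀ ht] at h
    nlinarith

theorem le_integral_mul_log {u : ℝ → ℝ} (hnn : ∀ x, 0 ≤ u x)
    (h2 : Integrable fun x => x ^ 2 * u x) {b : ℝ} (hb : 0 < b) :
    -(b * ∫ x, x ^ 2 * u x) - √(π / b) ≤ ∫ x, u x * log (u x) := by
  by_cases hent : Integrable fun x => u x * log (u x)
  · have hgauss : Integrable fun x : ℝ => exp (-b * x ^ 2) := integrable_exp_neg_mul_sq hb
    have hpt : ∀ x, -b * (x ^ 2 * u x) - exp (-b * x ^ 2) ≤ u x * log (u x) := fun x => by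
      have := mul_sub_exp_le_mul_log (-b * x ^ 2) (hnn x)
      linarith
    have := integral_mono (f := fun x => -b * (x ^ 2 * u x) - exp (-b * x ^ 2))
      ((h2.const_mul _).sub hgauss) hent hpt
    rwa [integral_sub (h2.const_mul _) hgauss, integral_const_mul, integral_gaussian,
      neg_mul] at this
  · rw [integral_undef hent]
    have hm2 : 0 ≤ ∫ x, x ^ 2 * u x := integral_nonneg fun x => mul_nonneg (sq_nonneg x) (hnn x)
    have hsqrt := sqrt_nonneg (π / b)
    nlinarith

theorem sqrt_pi_div_half_le : √(π / (1 / 2)) ≤ 1 / 2 + 8 * exp (-1) := by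
  have hsqrt : √(π / (1 / 2)) ≤ 3 :=
    sqrt_le_iff.2 ⟨by norm_num, by nlinarith [pi_le_four]⟩
  have hexp : 5 / 16 ≤ exp (-1) := by
    have : exp (-1) * exp 1 = 1 := by rw [← exp_add]; norm_num
    nlinarith [exp_one_lt_d9, exp_pos (-1)]
  linarith

theorem Polynomial.abs_eval_le_mul_one_add_abs_pow (p : Polynomial ℝ) (z : ℝ) :
    |p.eval z|
      ≤ (∑ k ∈ Finset.range (p.natDegree + 1), |p.coeff k|) * (1 + |z|) ^ p.natDegree := by
  rw [p.eval_eq_sum_range, Finset.sum_mul]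
  refine (Finset.abs_sum_le_sum_abs _ _).trans (Finset.sum_le_sum fun k hk => ?_)
  rw [abs_mul, abs_pow]
  have hz : 1 ≤ 1 + |z| := le_add_of_nonneg_right (abs_nonneg z)
  calc |p.coeff k| * |z| ^ k ≤ |p.coeff k| * (1 + |z|) ^ k := by gcongr; linarith
    _ ≤ |p.coeff k| * (1 + |z|) ^ p.natDegree := by
      gcongr
      exact Nat.lt_succ_iff.mp (Finset.mem_range.mp hk)

namespace HasAllMoments

variable {u : ℝ → ℝ}

theorem integrable_pow_mul_s9 (h : HasAllMoments u) (hu : Measurable u) (k : ℕ) :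
    Integrable fun x => x ^ k * u x :=
  (h k).mono (by fun_prop) (ae_of_all _ fun x => by simp)

theorem integrable_one_add_abs_pow_mul (h : HasAllMoments u) (d : ℕ) :
    Integrable fun x => (1 + |x|) ^ d * u x := by
  have : (fun x => (1 + |x|) ^ d * u x)
      = fun x => ∑ k ∈ Finset.range (d + 1), (d.choose k : ℝ) * (|x| ^ k * u x) := by
    funext x
    rw [add_comm, add_pow, Finset.sum_mul]
    exact Finset.sum_congr rfl fun k _ => by ring
  rw [this]
  exact integrable_finsetSum _ fun k _ => (h k).const_mul _

/-- Uses `|p(x - y)| ≤ M (1 + |x|)ᵈ (1 + |y|)ᵈ`, as `1 + |x - y| ≤ (1 + |x|) (1 + |y|)`. -/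
theorem integrable_eval_sub_mul_mul (h : HasAllMoments u) (hu : Measurable u)
    (p : Polynomial ℝ) :
    Integrable (fun z : ℝ × ℝ => p.eval (z.1 - z.2) * u z.1 * u z.2)
      ((volume : Measure ℝ).prod volume) := by
  set d := p.natDegree
  set M := ∑ k ∈ Finset.range (d + 1), |p.coeff k|
  have hM : 0 ≤ M := Finset.sum_nonneg fun k _ => abs_nonneg _
  have hw := (h.integrable_one_add_abs_pow_mul d).norm
  have hmeas : Measurable fun z : ℝ × ℝ => p.eval (z.1 - z.2) * u z.1 * u z.2 :=
    ((p.continuous.measurable.comp (measurable_fst.sub measurable_snd)).mul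
      (hu.comp measurable_fst)).mul (hu.comp measurable_snd)
  refine ((hw.const_mul M).mul_prod hw).mono' hmeas.aestronglyMeasurable
    (ae_of_all _ fun z => ?_)
  have hxy : 1 + |z.1 - z.2| ≤ (1 + |z.1|) * (1 + |z.2|) := by
    nlinarith [abs_sub z.1 z.2, abs_nonneg z.1, abs_nonneg z.2]
  have hp : |p.eval (z.1 - z.2)| ≤ M * ((1 + |z.1|) ^ d * (1 + |z.2|) ^ d) := by
    refine (p.abs_eval_le_mul_one_add_abs_pow _).trans ?_
    rw [← mul_pow]
    gcongr
  simp only [norm_mul, norm_pow, Real.norm_eq_abs, abs_of_nonneg (by positivity : 0 ≤ 1 + |z.1|),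
    abs_of_nonneg (by positivity : 0 ≤ 1 + |z.2|)]
  calc |p.eval (z.1 - z.2)| * |u z.1| * |u z.2|
      ≤ M * ((1 + |z.1|) ^ d * (1 + |z.2|) ^ d) * |u z.1| * |u z.2| := by gcongr
    _ = M * ((1 + |z.1|) ^ d * |u z.1|) * ((1 + |z.2|) ^ d * |u z.2|) := by ring

end HasAllMoments

theorem integral_prod_sub_sq_mul_mul {μ : Measure ℝ} [SFinite μ] {u : ℝ → ℝ}
    (h0 : Integrable u μ) (h1 : Integrable (fun x => x * u x) μ)
    (h2 : Integrable (fun x => x ^ 2 * u x) μ) :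
    ∫ z : ℝ × ℝ, (z.1 - z.2) ^ 2 * u z.1 * u z.2 ∂μ.prod μ
      = 2 * ((∫ x, u x ∂μ) * (∫ x, x ^ 2 * u x ∂μ) - (∫ x, x * u x ∂μ) ^ 2) := by
  have hexpand : (fun z : ℝ × ℝ => (z.1 - z.2) ^ 2 * u z.1 * u z.2)
      = fun z => (z.1 ^ 2 * u z.1 * u z.2 + (-2 * (z.1 * u z.1)) * (z.2 * u z.2))
          + u z.1 * (z.2 ^ 2 * u z.2) := by
    funext z; ring
  have ha : Integrable (fun z : ℝ × ℝ => z.1 ^ 2 * u z.1 * u z.2) (μ.prod μ) := h2.mul_prod h0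
  have hb : Integrable (fun z : ℝ × ℝ => (-2 * (z.1 * u z.1)) * (z.2 * u z.2)) (μ.prod μ) :=
    (h1.const_mul _).mul_prod h1
  have hc : Integrable (fun z : ℝ × ℝ => u z.1 * (z.2 ^ 2 * u z.2)) (μ.prod μ) := h0.mul_prod h2
  rw [hexpand, integral_add ?_ hc, integral_add ha hb,
    integral_prod_mul (fun x => x ^ 2 * u x) u,
    integral_prod_mul (fun x => -2 * (x * u x)) (fun y => y * u y),
    integral_prod_mul u (fun y => y ^ 2 * u y), integral_const_mul]
  · ring
  · exact ha.add hb

theorem HasAllMoments.mul_variance_le_integral_integral_eval {u : ℝ → ℝ} (h : HasAllMoments u)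
    (hu : Measurable u) (hnn : ∀ x, 0 ≤ u x) {q : Polynomial ℝ} {c : ℝ}
    (hq : ∀ z, c / 2 * z ^ 2 ≤ q.eval z) :
    c * ((∫ x, u x) * (∫ x, x ^ 2 * u x) - (∫ x, x * u x) ^ 2)
      ≤ ∫ x, ∫ y, q.eval (x - y) * u x * u y := by
  have hsq := h.integrable_eval_sub_mul_mul hu (Polynomial.C (c / 2) * Polynomial.X ^ 2)
  simp only [Polynomial.eval_mul, Polynomial.eval_C, Polynomial.eval_pow,
    Polynomial.eval_X] at hsq
  have hmono := integral_mono hsq (h.integrable_eval_sub_mul_mul hu q) fun z =>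
    mul_le_mul_of_nonneg_right (mul_le_mul_of_nonneg_right (hq _) (hnn _)) (hnn _)
  rw [integral_integral (h.integrable_eval_sub_mul_mul hu q)]
  have hvar := integral_prod_sub_sq_mul_mul (μ := volume) (by simpa using h 0)
    (by simpa using h.integrable_pow_mul_s9 hu 1) (h.integrable_pow_mul_s9 hu 2)
  simp only [mul_assoc, integral_const_mul] at hmono hvar ⊢
  rw [hvar] at hmono
  linarith

theorem stmt9_general
    (V : ℝ → ℝ)
    (F : ℝ → ℝ) (q : Polynomial ℝ)
    (hFq : ∀ x, F x = q.eval x)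
    (hFeven : ∀ x, F (-x) = F x) (hF0 : F 0 = 0)
    (hF''conv : ConvexOn ℝ Set.univ (deriv (deriv F)))
    (ε : ℝ) (hε : 0 < ε)
    (u : ℝ → ℝ) (hu : IsProbDensity u) (hmom : HasAllMoments u)
    (hVu : Integrable (fun x : ℝ => V x * u x)) :
    (-(ε / 4) - 4 * ε * Real.exp (-1)
        + (∫ x : ℝ, (V x + deriv (deriv F) 0 / 2 * x ^ 2 - ε / 4 * x ^ 2) * u x)
        - deriv (deriv F) 0 / 2 * (∫ x : ℝ, x * u x) ^ 2
      ≤ freeEnergy V F ε u)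
    ∧ ((∫ x : ℝ, x * u x) = 0 →
        -(ε / 4) - 4 * ε * Real.exp (-1)
          + (∫ x : ℝ, (V x + deriv (deriv F) 0 / 2 * x ^ 2 - ε / 4 * x ^ 2) * u x)
        ≤ freeEnergy V F ε u) := by
  obtain ⟨hu_meas, hu_nn, hu_one⟩ := hu
  have hF : F = fun x => q.eval x := funext hFq
  set c := deriv (deriv F) 0
  have hF_ge : ∀ z, c / 2 * z ^ 2 ≤ q.eval z := fun z => by
    have hF' : deriv F = fun x => q.derivative.eval x := by rw [hF]; exact funext fun x => q.deriv
    have := add_mul_sq_le_of_even_of_convexOn_deriv_deriv (hF ▸ q.differentiable)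
      (hF' ▸ q.derivative.differentiable) hFeven hF''conv z
    rwa [hF0, zero_add, hFq] at this
  have h2 := hmom.integrable_pow_mul_s9 hu_meas 2
  have hent := mul_le_mul_of_nonneg_left
    (le_integral_mul_log hu_nn h2 (by norm_num : (0 : ℝ) < 1 / 2)) (by positivity : 0 ≤ ε / 2)
  have hconst := mul_le_mul_of_nonneg_left sqrt_pi_div_half_le hε.le
  have hint := hmom.mul_variance_le_integral_integral_eval hu_meas hu_nn hF_ge
  rw [hu_one, one_mul] at hint
  have hsplit : ∫ x, (V x + c / 2 * x ^ 2 - ε / 4 * x ^ 2) * u x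
      = (∫ x, V x * u x) + (c / 2 - ε / 4) * ∫ x, x ^ 2 * u x := by
    rw [← integral_const_mul, ← integral_add hVu (h2.const_mul _)]
    exact integral_congr_ae (ae_of_all _ fun x => by ring)
  have hmain : -(ε / 4) - 4 * ε * exp (-1) + (∫ x, (V x + c / 2 * x ^ 2 - ε / 4 * x ^ 2) * u x)
      - c / 2 * (∫ x, x * u x) ^ 2 ≤ freeEnergy V F ε u := by
    rw [freeEnergy, hsplit, hF]
    linarith
  exact ⟨hmain, fun h0 => by simpa [h0] using hmain⟩

theorem stmt9
    (V : ℝ → ℝ) (hVmeas : Measurable V)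
    (n : ℕ) (hn : 1 ≤ n) (F : ℝ → ℝ) (q : Polynomial ℝ)
    (hFq : ∀ x, F x = q.eval x) (hFdeg : q.natDegree = 2 * n)
    (hFeven : ∀ x, F (-x) = F x) (hF0 : F 0 = 0)
    (hFconv : ConvexOn ℝ Set.univ F)
    (hF''conv : ConvexOn ℝ Set.univ (deriv (deriv F)))
    (ε : ℝ) (hε : 0 < ε)
    (u : ℝ → ℝ) (hu : IsProbDensity u) (hmom : HasAllMoments u)
    (hVu : Integrable (fun x : ℝ => V x * u x)) :
    (-(ε / 4) - 4 * ε * Real.exp (-1)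
        + (∫ x : ℝ, (V x + deriv (deriv F) 0 / 2 * x ^ 2 - ε / 4 * x ^ 2) * u x)
        - deriv (deriv F) 0 / 2 * (∫ x : ℝ, x * u x) ^ 2
      ≤ freeEnergy V F ε u)
    ∧ ((∫ x : ℝ, x * u x) = 0 →
        -(ε / 4) - 4 * ε * Real.exp (-1)
          + (∫ x : ℝ, (V x + deriv (deriv F) 0 / 2 * x ^ 2 - ε / 4 * x ^ 2) * u x)
        ≤ freeEnergy V F ε u) :=
  stmt9_general V F q hFq hFeven hF0 hF''conv ε hε u hu hmom hVu
end

section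
/- Let u be a probability density on ℝ with ∫_ℝ x² u(x) dx ≤ M. Then for every R > 0, −∫_ℝ u(x) log u(x) 1_{u(x) < 1} 1_{|x| > R} dx ≤ M/R + 8e⁻¹ e^{−R/2}. -/
/-!
Since `s ↦ exp (-1 - s)` is the convex conjugate of `a ↦ a log a`, we have
`-a log a ≤ a s + exp (-1 - s)` for all `a ≥ 0` and all `s`. On `{R < |x|}` take `s = |x|` and use
`|x| ≤ x² / R`: the integrand is dominated by `x² u / R + exp (-1 - |x|) 1_{|x| > R}`, whose
integral is at most `M / R + 2 e⁻¹ e^{-R} ≤ M / R + 8 e⁻¹ e^{-R/2}`.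
-/

open MeasureTheory Real Set

lemma neg_mul_log_le_mul_add_exp {a : ℝ} (ha : 0 ≤ a) (s : ℝ) :
    -(a * log a) ≤ a * s + exp (-1 - s) := by
  rcases ha.eq_or_lt with rfl | ha
  · simp only [zero_mul, neg_zero, zero_add]
    positivity
  have key := log_le_sub_one_of_pos (div_pos (exp_pos (-1 - s)) ha)
  rw [log_div (exp_pos _).ne' ha.ne', log_exp, le_sub_iff_add_le, le_div_iff₀ ha] at key
  linarith

lemma neg_mul_log_le_of_lt_abs {a x R : ℝ} (ha : 0 ≤ a) (hR : 0 < R) (hx : R < |x|) :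
    -(a * log a) ≤ x ^ 2 * a / R + exp (-1 - |x|) := by
  have habs : a * |x| ≤ x ^ 2 * a / R := by
    rw [le_div_iff₀ hR, ← sq_abs]
    nlinarith [mul_le_mul_of_nonneg_left hx.le (mul_nonneg ha (abs_nonneg x))]
  linarith [neg_mul_log_le_mul_add_exp ha |x|]

lemma integral_indicator_Ioi_exp_sub_comp_abs {R : ℝ} (hR : 0 ≤ R) (c : ℝ) :
    ∫ x, (Ioi R).indicator (fun t => exp (c - t)) |x| = 2 * exp (c - R) := by
  have hIoi : Ioi (0 : ℝ) ∩ Ioi R = Ioi R := Ioi_inter_Ioi.trans (by rw [max_eq_right hR])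
  simp_rw [sub_eq_add_neg c, exp_add]
  rw [integral_comp_abs (f := (Ioi R).indicator _), setIntegral_indicator measurableSet_Ioi, hIoi,
    integral_const_mul, integral_exp_neg_Ioi]

lemma integrable_indicator_Ioi_exp_sub_comp_abs {R : ℝ} (hR : 0 ≤ R) (c : ℝ) :
    Integrable fun x => (Ioi R).indicator (fun t => exp (c - t)) |x| :=
  .of_integral_ne_zero (by rw [integral_indicator_Ioi_exp_sub_comp_abs hR]; positivity)

theorem stmt14
    (u : ℝ → ℝ) (hu : IsProbDensity u)
    (M : ℝ) (hmom : Integrable (fun x : ℝ => x ^ 2 * u x))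
    (hM : (∫ x : ℝ, x ^ 2 * u x) ≤ M)
    (R : ℝ) (hR : 0 < R) :
    -(∫ x : ℝ, if u x < 1 ∧ R < |x| then u x * Real.log (u x) else 0)
      ≤ M / R + 8 * Real.exp (-1) * Real.exp (-R / 2) := by
  obtain ⟨-, hpos, -⟩ := hu
  set F : ℝ → ℝ := fun x => if u x < 1 ∧ R < |x| then u x * log (u x) else 0
  set G : ℝ → ℝ := fun x => x ^ 2 * u x / R + (Ioi R).indicator (fun t => exp (-1 - t)) |x|
  have hG_tail := integrable_indicator_Ioi_exp_sub_comp_abs hR.le (-1)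
  have hF_nonneg : ∀ x, 0 ≤ -F x := by
    intro x
    simp only [F]
    split_ifs with h
    · exact neg_nonneg.mpr (mul_log_nonpos (hpos x) h.1.le)
    · rw [neg_zero]
  have hF_le : ∀ x, -F x ≤ G x := by
    intro x
    simp only [F, G]
    split_ifs with h
    · rw [indicator_of_mem (show |x| ∈ Ioi R from h.2)]
      exact neg_mul_log_le_of_lt_abs (hpos x) hR h.2
    · have := hpos x
      exact neg_zero.trans_le
        (add_nonneg (by positivity) (indicator_nonneg (fun _ _ => (exp_pos _).le) _))
  have hexp : 2 * exp (-1 - R) ≤ 8 * exp (-1) * exp (-R / 2) := by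
    rw [sub_eq_add_neg, exp_add]
    nlinarith [exp_le_exp.mpr (by linarith : -R ≤ -R / 2), exp_pos (-1), exp_pos (-R)]
  calc -(∫ x, F x) = ∫ x, -F x := (integral_neg F).symm
    _ ≤ ∫ x, G x :=
      integral_mono_of_nonneg (.of_forall hF_nonneg) ((hmom.div_const R).add hG_tail)
        (.of_forall hF_le)
    _ = (∫ x, x ^ 2 * u x) / R + 2 * exp (-1 - R) := by
      rw [integral_add (hmom.div_const R) hG_tail, integral_div,
        integral_indicator_Ioi_exp_sub_comp_abs hR.le]
    _ ≤ M / R + 8 * exp (-1) * exp (-R / 2) :=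
      add_le_add (div_le_div_of_nonneg_right hM hR.le) hexp
end

section
/- For ε > 0 define the probability density v_ε(x) := Z_ε⁻¹ exp[−(2/ε)(V(x) + F(x − a))], where Z_ε = ∫_ℝ exp[−(2/ε)(V(y) + F(y − a))] dy. Then lim_{ε→0} Υ_ε(v_ε) = V(a). -/
open MeasureTheory Real Filter Topology

/-- A stationary measure of the self-stabilizing diffusion: a probability density with
finite moments of all orders satisfying the Gibbs fixed-point equation. -/
def IsStationaryDensity (V F : ℝ → ℝ) (ε : ℝ) (u : ℝ → ℝ) : Prop :=
  IsProbDensity u ∧ HasAllMoments u ∧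
    ∀ x : ℝ, u x =
      (∫ y : ℝ, Real.exp (-(2 / ε) * (V y + interConv F u y)))⁻¹ *
        Real.exp (-(2 / ε) * (V x + interConv F u x))

/-!
Put `W x = V x + F (x - a)` and `t = 2 / ε`, so that `v_ε = e^{-t W} / Z_t`. Since `ε t / 2 = 1`,
the entropy term is `-(log Z_t) / t - ∫ W v_ε`, hence
`Υ_ε(v_ε) = -(log Z_t) / t - ∫ F(x - a) v_ε + ½ ∬ F(x - y) v_ε(x) v_ε(y)`.
Convexity and evenness of `F` give `F(x - y) ≤ ½ (F(2(x - a)) + F(2(y - a)))`, so the double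
integral lies between `0` and `∫ F(2(x - a)) v_ε`.

The potential `W` grows quadratically and has the unique minimiser `a`, with `W a = V a`:
`V` is minimal at `±a` and `F > 0` away from `0`. Laplace's principle gives
`(log Z_t) / t → -V a`, and the Gibbs densities concentrate at `a`, so `∫ g v_ε → 0` for
every continuous, polynomially bounded `g ≥ 0` with `g a = 0`.
-/

open Polynomial

noncomputable def partitionFunction (W : ℝ → ℝ) (t : ℝ) : ℝ := ∫ x, exp (-t * W x)

noncomputable def gibbsDensity (W : ℝ → ℝ) (t x : ℝ) : ℝ :=
  (partitionFunction W t)⁻¹ * exp (-t * W x)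

section GibbsMeasure

variable {W g : ℝ → ℝ} {K a t : ℝ}

lemma integrable_eval_mul_exp_neg_mul_sq (r : ℝ[X]) {b : ℝ} (hb : 0 < b) :
    Integrable fun x => r.eval x * exp (-b * x ^ 2) := by
  simp_rw [eval_eq_sum_range, Finset.sum_mul]
  refine integrable_finsetSum _ fun i _ => ?_
  simpa [mul_assoc] using (integrable_rpow_mul_exp_neg_mul_sq hb (s := i)
    (by linarith [i.cast_nonneg (α := ℝ)])).const_mul (r.coeff i)

lemma tendsto_cocompact_atTop_of_sq_sub_le (hK : ∀ x, x ^ 2 - K ≤ W x) :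
    Tendsto W (cocompact ℝ) atTop := by
  refine tendsto_atTop_mono hK (tendsto_atTop_add_const_right _ (-K) ?_)
  refine ((tendsto_pow_atTop two_ne_zero).comp (tendsto_norm_cocompact_atTop (E := ℝ))).congr
    fun x => ?_
  simp [sq_abs]

lemma integrable_mul_exp_neg_mul (hW : Continuous W) (hK : ∀ x, x ^ 2 - K ≤ W x)
    (hg : Continuous g) (r : ℝ[X]) (hgr : ∀ x, |g x| ≤ |r.eval x|) (ht : 0 < t) :
    Integrable fun x => g x * exp (-t * W x) := by
  refine ((integrable_eval_mul_exp_neg_mul_sq r ht).norm.const_mul (exp (t * K))).mono'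
    (by fun_prop) (.of_forall fun x => ?_)
  have hexp : exp (-t * W x) ≤ exp (t * K) * exp (-t * x ^ 2) := by
    rw [← exp_add]
    exact exp_le_exp.2 (by nlinarith [hK x])
  simp only [norm_mul, Real.norm_eq_abs, abs_of_pos (exp_pos _)]
  calc |g x| * exp (-t * W x) ≤ |r.eval x| * (exp (t * K) * exp (-t * x ^ 2)) :=
        mul_le_mul (hgr x) hexp (exp_pos _).le (abs_nonneg _)
    _ = _ := by ring

lemma integrable_exp_neg_mul (hW : Continuous W) (hK : ∀ x, x ^ 2 - K ≤ W x) (ht : 0 < t) :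
    Integrable fun x => exp (-t * W x) := by
  simpa using integrable_mul_exp_neg_mul hW hK (g := fun _ => 1) continuous_const (1 : ℝ[X])
    (fun _ => by simp) ht

lemma partitionFunction_pos (hW : Continuous W) (hK : ∀ x, x ^ 2 - K ≤ W x) (ht : 0 < t) :
    0 < partitionFunction W t := by
  rw [partitionFunction, integral_pos_iff_support_of_nonneg (fun x => (exp_pos _).le)
    (integrable_exp_neg_mul hW hK ht)]
  simp [Function.support, (exp_pos _).ne']

lemma partitionFunction_le (hW : Continuous W) (hK : ∀ x, x ^ 2 - K ≤ W x)
    (hmin : ∀ x, W a ≤ W x) (ht : 1 ≤ t) :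
    partitionFunction W t ≤ exp (-(t - 1) * W a) * partitionFunction W 1 := by
  rw [partitionFunction, partitionFunction, ← integral_const_mul]
  refine integral_mono (integrable_exp_neg_mul hW hK (by linarith))
    ((integrable_exp_neg_mul hW hK one_pos).const_mul _) fun x => ?_
  rw [← exp_add]
  exact exp_le_exp.2 (by nlinarith [hmin x])

lemma mul_exp_le_partitionFunction (hW : Continuous W) (hK : ∀ x, x ^ 2 - K ≤ W x)
    (ht : 0 < t) {δ c : ℝ} (hδ : 0 < δ) (hc : ∀ x ∈ Metric.ball a δ, W x ≤ c) :
    2 * δ * exp (-t * c) ≤ partitionFunction W t := by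
  have hint := integrable_exp_neg_mul hW hK ht
  calc 2 * δ * exp (-t * c) = ∫ _ in Metric.ball a δ, exp (-t * c) := by
        rw [setIntegral_const, measureReal_def, Real.volume_ball,
          ENNReal.toReal_ofReal (by positivity), smul_eq_mul]
    _ ≤ ∫ x in Metric.ball a δ, exp (-t * W x) :=
        setIntegral_mono_on (integrableOn_const measure_ball_lt_top.ne) hint.integrableOn
          measurableSet_ball fun x hx => exp_le_exp.2 (by nlinarith [hc x hx])
    _ ≤ partitionFunction W t :=
        setIntegral_le_integral hint (.of_forall fun x => (exp_pos _).le)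

lemma tendsto_log_partitionFunction_div_atTop (hW : Continuous W) (hK : ∀ x, x ^ 2 - K ≤ W x)
    (hmin : ∀ x, W a ≤ W x) :
    Tendsto (fun t => log (partitionFunction W t) / t) atTop (𝓝 (-W a)) := by
  have hZ := fun {t : ℝ} (ht : 0 < t) => partitionFunction_pos hW hK ht
  refine tendsto_order.2 ⟨fun b hb => ?_, fun b hb => ?_⟩
  · set η := (-W a - b) / 2
    obtain ⟨δ, hδ, hball⟩ :=
      Metric.continuousAt_iff.1 (hW.continuousAt (x := a)) η (by simp only [η]; linarith)
    have hlim : Tendsto (fun t => log (2 * δ) / t - (W a + η)) atTop (𝓝 (-W a - η)) := by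
      simpa [sub_eq_add_neg, add_comm] using
        ((tendsto_const_nhds (x := log (2 * δ))).div_atTop tendsto_id).sub_const (W a + η)
    filter_upwards [hlim.eventually_const_lt (show b < -W a - η by simp only [η]; linarith),
      eventually_gt_atTop 0] with t hbt ht
    have hlow := mul_exp_le_partitionFunction hW hK ht hδ (c := W a + η) fun x hx =>
      by linarith [(abs_lt.1 (hball hx)).2]
    rw [← log_le_log_iff (by positivity) (hZ ht), log_mul (by positivity) (exp_pos _).ne',
      log_exp] at hlow
    calc b < log (2 * δ) / t - (W a + η) := hbt
      _ = (log (2 * δ) + -t * (W a + η)) / t := by field_simp; ring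
      _ ≤ log (partitionFunction W t) / t := div_le_div_of_nonneg_right hlow ht.le
  · set C := W a + log (partitionFunction W 1)
    have hlim : Tendsto (fun t => C / t - W a) atTop (𝓝 (-W a)) := by
      simpa using ((tendsto_const_nhds (x := C)).div_atTop tendsto_id).sub_const (W a)
    filter_upwards [hlim.eventually_lt_const hb, eventually_ge_atTop 1] with t hbt ht
    have hup := partitionFunction_le hW hK hmin ht
    rw [← log_le_log_iff (hZ (by linarith)) (mul_pos (exp_pos _) (hZ one_pos)),
      log_mul (exp_pos _).ne' (hZ one_pos).ne', log_exp] at hup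
    calc log (partitionFunction W t) / t
        ≤ (-(t - 1) * W a + log (partitionFunction W 1)) / t :=
          div_le_div_of_nonneg_right hup (by linarith)
      _ = C / t - W a := by field_simp; ring
      _ < b := hbt

lemma exists_add_le_of_le_dist (hW : Continuous W) (hK : ∀ x, x ^ 2 - K ≤ W x)
    (hmin : ∀ x ≠ a, W a < W x) {δ : ℝ} (hδ : 0 < δ) :
    ∃ c > 0, ∀ x, δ ≤ dist x a → W a + c ≤ W x := by
  have hclosed : IsClosed {x | δ ≤ dist x a} := isClosed_le continuous_const (by fun_prop)
  have hmem : a + δ ∈ {x | δ ≤ dist x a} := by simp [abs_of_pos hδ]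
  obtain ⟨x₀, hx₀, hx₀min⟩ := hW.continuousOn.exists_isMinOn' hclosed hmem
    (((tendsto_cocompact_atTop_of_sq_sub_le hK).eventually_ge_atTop _).filter_mono inf_le_left)
  have hx₀a : x₀ ≠ a := fun h => by simp [h] at hx₀; linarith
  exact ⟨W x₀ - W a, by linarith [hmin x₀ hx₀a],
    fun x hx => by linarith [isMinOn_iff.1 hx₀min x hx]⟩

lemma gibbsDensity_nonneg (W : ℝ → ℝ) (t x : ℝ) : 0 ≤ gibbsDensity W t x :=
  mul_nonneg (inv_nonneg.2 (integral_nonneg fun _ => (exp_pos _).le)) (exp_pos _).le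

lemma integral_gibbsDensity (hZ : partitionFunction W t ≠ 0) : ∫ x, gibbsDensity W t x = 1 := by
  simp only [gibbsDensity, integral_const_mul]
  exact inv_mul_cancel₀ hZ

lemma integral_mul_gibbsDensity (f W : ℝ → ℝ) (t : ℝ) :
    ∫ x, f x * gibbsDensity W t x = (∫ x, f x * exp (-t * W x)) / partitionFunction W t := by
  simp only [gibbsDensity, mul_left_comm (f _), integral_const_mul, div_eq_inv_mul]

lemma integrable_mul_gibbsDensity {f : ℝ → ℝ}
    (hf : Integrable fun x => f x * exp (-t * W x)) :
    Integrable fun x => f x * gibbsDensity W t x := by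
  simpa only [gibbsDensity, mul_left_comm] using hf.const_mul (partitionFunction W t)⁻¹

/-- Off the ball, `e^{-t W} ≤ e^{-(t - 1)(W a + c)} e^{-W}`. -/
lemma integral_mul_exp_neg_mul_le (hW : Continuous W) (hK : ∀ x, x ^ 2 - K ≤ W x)
    (hg : Continuous g) (hg0 : ∀ x, 0 ≤ g x) (r : ℝ[X]) (hgr : ∀ x, g x ≤ r.eval x)
    {δ η c : ℝ} (hδ : 0 < δ) (hgη : ∀ x, dist x a < δ → g x ≤ η)
    (hWc : ∀ x, δ ≤ dist x a → W a + c ≤ W x) (ht : 1 ≤ t) :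
    ∫ x, g x * exp (-t * W x) ≤
      η * partitionFunction W t + exp (-(t - 1) * (W a + c)) * ∫ x, g x * exp (-1 * W x) := by
  have hint := fun {s : ℝ} (hs : 0 < s) => integrable_mul_exp_neg_mul hW hK hg r
    (fun x => by rw [abs_of_nonneg (hg0 x)]; exact (hgr x).trans (le_abs_self _)) hs
  have hexp := integrable_exp_neg_mul hW hK (t := t) (by linarith)
  have hη : 0 ≤ η := (hg0 a).trans (hgη a (by simpa using hδ))
  rw [partitionFunction, ← integral_const_mul, ← integral_const_mul,
    ← integral_add (hexp.const_mul _) ((hint one_pos).const_mul _)]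
  refine integral_mono (hint (by linarith)) ((hexp.const_mul _).add ((hint one_pos).const_mul _))
    fun x => ?_
  have hfar := mul_nonneg (exp_pos (-(t - 1) * (W a + c))).le
    (mul_nonneg (hg0 x) (exp_pos (-1 * W x)).le)
  rcases lt_or_ge (dist x a) δ with hx | hx
  · exact (mul_le_mul_of_nonneg_right (hgη x hx) (exp_pos _).le).trans
      (le_add_of_nonneg_right hfar)
  · calc g x * exp (-t * W x) = exp (-(t - 1) * W x) * (g x * exp (-1 * W x)) := by
          rw [mul_left_comm, ← exp_add]; ring_nf
      _ ≤ exp (-(t - 1) * (W a + c)) * (g x * exp (-1 * W x)) :=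
          mul_le_mul_of_nonneg_right (exp_le_exp.2 (by nlinarith [hWc x hx]))
            (mul_nonneg (hg0 x) (exp_pos _).le)
      _ ≤ _ := le_add_of_nonneg_left (mul_nonneg hη (exp_pos _).le)

/-- The out-of-ball contribution decays like `e^{-t c}`, while by Laplace's principle the
partition function decays no faster than `e^{-t (W a + c / 2)}`. -/
lemma tendsto_integral_mul_gibbsDensity_atTop (hW : Continuous W) (hK : ∀ x, x ^ 2 - K ≤ W x)
    (hmin : ∀ x ≠ a, W a < W x) (hg : Continuous g) (hg0 : ∀ x, 0 ≤ g x) (hga : g a = 0)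
    (r : ℝ[X]) (hgr : ∀ x, g x ≤ r.eval x) :
    Tendsto (fun t => ∫ x, g x * gibbsDensity W t x) atTop (𝓝 0) := by
  refine tendsto_order.2 ⟨fun b hb => .of_forall fun t => hb.trans_le
    (integral_nonneg fun x => mul_nonneg (hg0 x) (gibbsDensity_nonneg W t x)), fun η hη => ?_⟩
  obtain ⟨δ, hδ, hgδ⟩ :=
    Metric.continuousAt_iff.1 (hg.continuousAt (x := a)) (η / 2) (half_pos hη)
  have hgη : ∀ x, dist x a < δ → g x ≤ η / 2 := fun x hx => by
    simpa [hga, abs_of_nonneg (hg0 x)] using (hgδ hx).le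
  obtain ⟨c, hc, hWc⟩ := exists_add_le_of_le_dist hW hK hmin hδ
  have hmin' : ∀ x, W a ≤ W x := fun x =>
    (eq_or_ne x a).elim (fun h => h ▸ le_rfl) fun hx => (hmin x hx).le
  have hZlow : ∀ᶠ t in atTop, exp (-t * (W a + c / 2)) ≤ partitionFunction W t := by
    filter_upwards [(tendsto_log_partitionFunction_div_atTop hW hK hmin').eventually_const_lt
      (show -W a - c / 2 < -W a by linarith), eventually_gt_atTop 0] with t hlog ht
    rw [lt_div_iff₀ ht] at hlog
    rw [← exp_log (partitionFunction_pos hW hK ht)]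
    exact exp_le_exp.2 (by linarith)
  set M := ∫ x, g x * exp (-1 * W x)
  have hM : 0 ≤ M := integral_nonneg fun x => mul_nonneg (hg0 x) (exp_pos _).le
  have hB : Tendsto (fun t => η / 2 + M * exp (W a + c) * exp (-(c / 2 * t))) atTop
      (𝓝 (η / 2)) := by
    simpa using (tendsto_exp_neg_atTop_nhds_zero.comp
      (tendsto_id.const_mul_atTop (half_pos hc))).const_mul (M * exp (W a + c)) |>.const_add _
  filter_upwards [hB.eventually_lt_const (half_lt_self hη), hZlow, eventually_ge_atTop 1]
    with t hBt hZt ht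
  have hZ := partitionFunction_pos hW hK (t := t) (by linarith)
  calc ∫ x, g x * gibbsDensity W t x
      ≤ (η / 2 * partitionFunction W t + exp (-(t - 1) * (W a + c)) * M) /
          partitionFunction W t := by
        rw [integral_mul_gibbsDensity]
        exact div_le_div_of_nonneg_right
          (integral_mul_exp_neg_mul_le hW hK hg hg0 r hgr hδ hgη hWc ht) hZ.le
    _ = η / 2 + M * (exp (-(t - 1) * (W a + c)) / partitionFunction W t) := by
        field_simp
    _ ≤ η / 2 + M * (exp (-(t - 1) * (W a + c)) / exp (-t * (W a + c / 2))) := by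
        gcongr
    _ = η / 2 + M * exp (W a + c) * exp (-(c / 2 * t)) := by
        rw [← exp_sub, mul_assoc, ← exp_add]; ring_nf
    _ < η := hBt

lemma integral_gibbsDensity_mul_log (hZ : partitionFunction W t ≠ 0)
    (hWint : Integrable fun x => W x * exp (-t * W x)) :
    ∫ x, gibbsDensity W t x * log (gibbsDensity W t x) =
      -log (partitionFunction W t) - t * ∫ x, W x * gibbsDensity W t x := by
  have hu : Integrable (gibbsDensity W t) :=
    Integrable.of_integral_ne_zero (by simp [integral_gibbsDensity hZ])
  have hlog : ∀ x, log (gibbsDensity W t x) = -log (partitionFunction W t) - t * W x :=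
    fun x => by
      rw [gibbsDensity, log_mul (inv_ne_zero hZ) (exp_pos _).ne', log_inv, log_exp]; ring
  calc ∫ x, gibbsDensity W t x * log (gibbsDensity W t x)
      = ∫ x, -log (partitionFunction W t) * gibbsDensity W t x
          - t * (W x * gibbsDensity W t x) :=
        integral_congr_ae (.of_forall fun x => by simp only [hlog]; ring)
    _ = _ := by
        rw [integral_sub (hu.const_mul _) ((integrable_mul_gibbsDensity hWint).const_mul _),
          integral_const_mul, integral_const_mul, integral_gibbsDensity hZ, mul_one]

end GibbsMeasure

lemma integral_integral_mul_le_of_le_add {k : ℝ → ℝ → ℝ} {h u : ℝ → ℝ}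
    (hk0 : ∀ x y, 0 ≤ k x y) (hkh : ∀ x y, k x y ≤ (h x + h y) / 2) (hu0 : ∀ x, 0 ≤ u x)
    (hu1 : ∫ x, u x = 1) (hhu : Integrable fun x => h x * u x) :
    ∫ x, ∫ y, k x y * u x * u y ≤ ∫ x, h x * u x := by
  have hu : Integrable u := Integrable.of_integral_ne_zero (by simp [hu1])
  have hkuu : ∀ x y, 0 ≤ k x y * u x * u y := fun x y =>
    mul_nonneg (mul_nonneg (hk0 x y) (hu0 x)) (hu0 y)
  set I := ∫ x, h x * u x
  have hinner : ∀ x, ∫ y, k x y * u x * u y ≤ (h x * u x + I * u x) / 2 := fun x => calc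
    ∫ y, k x y * u x * u y ≤ ∫ y, h x * u x / 2 * u y + u x / 2 * (h y * u y) :=
        integral_mono_of_nonneg (.of_forall (hkuu x)) ((hu.const_mul _).add (hhu.const_mul _))
          (.of_forall fun y => by
            linear_combination mul_le_mul_of_nonneg_right (hkh x y) (mul_nonneg (hu0 x) (hu0 y)))
    _ = (h x * u x + I * u x) / 2 := by
        rw [integral_add (hu.const_mul _) (hhu.const_mul _), integral_const_mul,
          integral_const_mul, hu1]
        ring
  calc ∫ x, ∫ y, k x y * u x * u y ≤ ∫ x, (h x * u x + I * u x) / 2 :=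
        integral_mono_of_nonneg (.of_forall fun x => integral_nonneg (hkuu x))
          ((hhu.add (hu.const_mul I)).div_const 2) (.of_forall hinner)
    _ = I := by
        rw [integral_div, integral_add hhu (hu.const_mul I), integral_const_mul, hu1]
        ring

section Potentials

variable {F : ℝ → ℝ}

lemma ConvexOn.nonneg_of_even_s17 (hF : ConvexOn ℝ Set.univ F) (heven : ∀ x, F (-x) = F x)
    (hF0 : F 0 = 0) (x : ℝ) : 0 ≤ F x := by
  have := hF.2 (Set.mem_univ x) (Set.mem_univ (-x)) (by norm_num : (0 : ℝ) ≤ 1 / 2)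
    (by norm_num : (0 : ℝ) ≤ 1 / 2) (by norm_num)
  simp only [smul_eq_mul, heven] at this
  rw [show 1 / 2 * x + 1 / 2 * -x = 0 by ring, hF0] at this
  linarith

lemma ConvexOn.map_sub_le_of_even (hF : ConvexOn ℝ Set.univ F) (heven : ∀ x, F (-x) = F x)
    (a x y : ℝ) : F (x - y) ≤ (F (2 * (x - a)) + F (2 * (y - a))) / 2 := by
  have := hF.2 (Set.mem_univ (2 * (x - a))) (Set.mem_univ (-(2 * (y - a))))
    (by norm_num : (0 : ℝ) ≤ 1 / 2) (by norm_num : (0 : ℝ) ≤ 1 / 2) (by norm_num)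
  simp only [smul_eq_mul, heven] at this
  rw [show 1 / 2 * (2 * (x - a)) + 1 / 2 * -(2 * (y - a)) = x - y by ring] at this
  linarith

/-- If `F x = 0`, convexity forces `F = 0` on the segment `[0, x]`, which a nonzero
polynomial cannot do. -/
lemma ConvexOn.pos_of_eval_ne_zero (hF : ConvexOn ℝ Set.univ F) (hF0 : F 0 = 0)
    (hnonneg : ∀ x, 0 ≤ F x) (q : ℝ[X]) (hq : ∀ x, F x = q.eval x) (hq0 : q ≠ 0) {x : ℝ}
    (hx : x ≠ 0) : 0 < F x := by
  refine (hnonneg x).lt_of_ne fun hFx => hq0 (q.eq_zero_of_infinite_isRoot ?_)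
  refine (Set.Icc_infinite (min_lt_max.2 hx.symm)).mono fun s hs => ?_
  have hseg : s ∈ segment ℝ 0 x := by rwa [segment_eq_uIcc]
  have := hF.le_on_segment (Set.mem_univ 0) (Set.mem_univ x) hseg
  rw [hF0, ← hFx, max_self] at this
  simpa [Polynomial.IsRoot, ← hq] using le_antisymm this (hnonneg s)

lemma exists_sq_sub_le_quartic {C₄ : ℝ} (hC₄ : 0 < C₄) (C₂ : ℝ) :
    ∃ K, ∀ x : ℝ, x ^ 2 - K ≤ C₄ * x ^ 4 - C₂ * x ^ 2 := by
  refine ⟨(1 + C₂) ^ 2 / (4 * C₄), fun x => ?_⟩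
  have h : (1 + C₂) ^ 2 / (4 * C₄) * (4 * C₄) = (1 + C₂) ^ 2 :=
    div_mul_cancel₀ _ (by positivity)
  nlinarith [sq_nonneg (2 * C₄ * x ^ 2 - (1 + C₂))]

/-- A global minimiser exists by coercivity and is a critical point; it is not the strict local
maximum `0`, and `f (-a) = f a`. -/
lemma apply_le_of_even_of_deriv_eq_zero {f : ℝ → ℝ} {a : ℝ} (hf : Continuous f)
    (hcoer : Tendsto f (cocompact ℝ) atTop) (heven : ∀ x, f (-x) = f x)
    (hcrit : ∀ x, deriv f x = 0 → x = -a ∨ x = 0 ∨ x = a) (h0 : deriv (deriv f) 0 < 0)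
    (x : ℝ) : f a ≤ f x := by
  obtain ⟨x₀, hx₀⟩ := hf.exists_forall_le hcoer
  have hlocmin : IsLocalMin f x₀ := .of_forall hx₀
  rcases hcrit x₀ hlocmin.deriv_eq_zero with rfl | rfl | rfl
  · exact heven a ▸ hx₀ x
  · exfalso
    have hmax := isLocalMax_of_deriv_deriv_neg h0 hlocmin.deriv_eq_zero hf.continuousAt
    have hconst : f =ᶠ[𝓝 0] fun _ => f 0 := hmax.mono fun y hy => le_antisymm hy (hx₀ y)
    simpa using hconst.deriv.deriv_eq.symm.trans_lt h0
  · exact hx₀ x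

end Potentials

section FreeEnergy

variable {V F W : ℝ → ℝ} {a t : ℝ}

lemma freeEnergy_gibbsDensity_eq (hW : ∀ x, W x = V x + F (x - a)) (ht : 0 < t)
    (hZ : partitionFunction W t ≠ 0) (hWint : Integrable fun x => W x * exp (-t * W x))
    (hFint : Integrable fun x => F (x - a) * exp (-t * W x)) :
    freeEnergy V F (2 / t) (gibbsDensity W t) =
      -(log (partitionFunction W t) / t) - (∫ x, F (x - a) * gibbsDensity W t x)
        + 1 / 2 * ∫ x, ∫ y, F (x - y) * gibbsDensity W t x * gibbsDensity W t y := by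
  have hV : ∫ x, V x * gibbsDensity W t x =
      (∫ x, W x * gibbsDensity W t x) - ∫ x, F (x - a) * gibbsDensity W t x := by
    rw [← integral_sub (integrable_mul_gibbsDensity hWint) (integrable_mul_gibbsDensity hFint)]
    exact integral_congr_ae (.of_forall fun x => by simp only [hW]; ring)
  rw [freeEnergy, integral_gibbsDensity_mul_log hZ hWint, hV]
  field_simp
  ring

lemma freeEnergy_gibbsDensity_mem_Icc (hW : ∀ x, W x = V x + F (x - a)) (ht : 0 < t)
    (hFconv : ConvexOn ℝ Set.univ F) (hFeven : ∀ x, F (-x) = F x) (hFnonneg : ∀ x, 0 ≤ F x)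
    (hZ : partitionFunction W t ≠ 0) (hWint : Integrable fun x => W x * exp (-t * W x))
    (hFint : Integrable fun x => F (x - a) * exp (-t * W x))
    (hF2int : Integrable fun x => F (2 * (x - a)) * exp (-t * W x)) :
    freeEnergy V F (2 / t) (gibbsDensity W t) ∈ Set.Icc
      (-(log (partitionFunction W t) / t) - ∫ x, F (x - a) * gibbsDensity W t x)
      (-(log (partitionFunction W t) / t) - (∫ x, F (x - a) * gibbsDensity W t x)
        + 1 / 2 * ∫ x, F (2 * (x - a)) * gibbsDensity W t x) := by
  rw [freeEnergy_gibbsDensity_eq hW ht hZ hWint hFint]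
  have hD0 : 0 ≤ ∫ x, ∫ y, F (x - y) * gibbsDensity W t x * gibbsDensity W t y :=
    integral_nonneg fun x => integral_nonneg fun y => mul_nonneg
      (mul_nonneg (hFnonneg _) (gibbsDensity_nonneg W t x)) (gibbsDensity_nonneg W t y)
  have hD := integral_integral_mul_le_of_le_add (fun x y => hFnonneg (x - y))
    (hFconv.map_sub_le_of_even hFeven a) (gibbsDensity_nonneg W t) (integral_gibbsDensity hZ)
    (integrable_mul_gibbsDensity hF2int)
  constructor <;> linarith

theorem tendsto_freeEnergy_gibbsDensity_atTop {K : ℝ} (p q : ℝ[X])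
    (hVp : ∀ x, V x = p.eval x) (hFq : ∀ x, F x = q.eval x) (hW : ∀ x, W x = V x + F (x - a))
    (hFconv : ConvexOn ℝ Set.univ F) (hFeven : ∀ x, F (-x) = F x) (hF0 : F 0 = 0)
    (hFnonneg : ∀ x, 0 ≤ F x) (hK : ∀ x, x ^ 2 - K ≤ W x) (hmin : ∀ x ≠ a, W a < W x) :
    Tendsto (fun t => freeEnergy V F (2 / t) (gibbsDensity W t)) atTop (𝓝 (V a)) := by
  have hWp : ∀ x, W x = (p + q.comp (X - C a)).eval x := by simp [hW, hVp, hFq]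
  have hFa : ∀ x, F (x - a) = (q.comp (X - C a)).eval x := by simp [hFq]
  have hF2 : ∀ x, F (2 * (x - a)) = (q.comp (C 2 * (X - C a))).eval x := by simp [hFq]
  have hWc : Continuous W := (continuous_congr hWp).2 (Polynomial.continuous _)
  have hFc : Continuous F := (continuous_congr hFq).2 (Polynomial.continuous _)
  have hint := fun {g : ℝ → ℝ} (hg : Continuous g) (r : ℝ[X]) (hgr : ∀ x, g x = r.eval x)
    {t : ℝ} (ht : 0 < t) =>
    integrable_mul_exp_neg_mul hWc hK hg r (fun x => (congrArg abs (hgr x)).le) ht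
  have hconc := fun {g : ℝ → ℝ} (hg : Continuous g) (r : ℝ[X]) (hgr : ∀ x, g x = r.eval x)
    (hg0 : ∀ x, 0 ≤ g x) (hga : g a = 0) =>
    tendsto_integral_mul_gibbsDensity_atTop hWc hK hmin hg hg0 hga r fun x => (hgr x).le
  have hlog : Tendsto (fun t => -(log (partitionFunction W t) / t)) atTop (𝓝 (V a)) := by
    have hmin' : ∀ x, W a ≤ W x := fun x =>
      (eq_or_ne x a).elim (fun h => h ▸ le_rfl) fun hx => (hmin x hx).le
    simpa [hW, hF0] using (tendsto_log_partitionFunction_div_atTop hWc hK hmin').neg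
  have hlimFa := hconc (by fun_prop) _ hFa (fun x => hFnonneg _) (by simp [hF0])
  have hlimF2 := hconc (by fun_prop) _ hF2 (fun x => hFnonneg _) (by simp [hF0])
  have hbounds : ∀ᶠ t in atTop, freeEnergy V F (2 / t) (gibbsDensity W t) ∈ Set.Icc
      (-(log (partitionFunction W t) / t) - ∫ x, F (x - a) * gibbsDensity W t x)
      (-(log (partitionFunction W t) / t) - (∫ x, F (x - a) * gibbsDensity W t x)
        + 1 / 2 * ∫ x, F (2 * (x - a)) * gibbsDensity W t x) := by
    filter_upwards [eventually_gt_atTop 0] with t ht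
    exact freeEnergy_gibbsDensity_mem_Icc hW ht hFconv hFeven hFnonneg
      (partitionFunction_pos hWc hK ht).ne' (hint hWc _ hWp ht) (hint (by fun_prop) _ hFa ht)
      (hint (by fun_prop) _ hF2 ht)
  exact tendsto_of_tendsto_of_tendsto_of_le_of_le' (by simpa only [sub_zero] using hlog.sub hlimFa)
    (by simpa only [sub_zero, mul_zero, add_zero] using
      (hlog.sub hlimFa).add (hlimF2.const_mul (1 / 2)))
    (hbounds.mono fun _ h => h.1) (hbounds.mono fun _ h => h.2)

end FreeEnergy

theorem stmt17_general
    (n : ℕ) (hn : 1 ≤ n)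
    (V F : ℝ → ℝ) (p q : Polynomial ℝ)
    (hVp : ∀ x, V x = p.eval x)
    (hVeven : ∀ x, V (-x) = V x)
    (a : ℝ)
    (hVcrit : ∀ x, deriv V x = 0 ↔ x = -a ∨ x = 0 ∨ x = a)
    (hV0'' : deriv (deriv V) 0 < 0)
    (C₂ C₄ : ℝ) (hC₄ : 0 < C₄)
    (hVgrowth : ∀ x, C₄ * x ^ 4 - C₂ * x ^ 2 ≤ V x)
    (hFq : ∀ x, F x = q.eval x) (hFdeg : q.natDegree = 2 * n)
    (hFeven : ∀ x, F (-x) = F x) (hF0 : F 0 = 0)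
    (hFconv : ConvexOn ℝ Set.univ F)
    :
    Tendsto (fun ε : ℝ => freeEnergy V F ε
        (fun x => (∫ y : ℝ, Real.exp (-(2 / ε) * (V y + F (y - a))))⁻¹ *
          Real.exp (-(2 / ε) * (V x + F (x - a)))))
      (𝓝[>] (0 : ℝ)) (𝓝 (V a)) := by
  obtain ⟨K, hK⟩ := exists_sq_sub_le_quartic hC₄ C₂
  have hFnonneg := hFconv.nonneg_of_even_s17 hFeven hF0
  have hq0 : q ≠ 0 := by rintro rfl; simp at hFdeg; omega
  have hVmin : ∀ x, V a ≤ V x := apply_le_of_even_of_deriv_eq_zero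
    ((continuous_congr hVp).2 p.continuous)
    (tendsto_cocompact_atTop_of_sq_sub_le fun x => (hK x).trans (hVgrowth x)) hVeven
    (fun x => (hVcrit x).1) hV0''
  have hlim := tendsto_freeEnergy_gibbsDensity_atTop (K := K) (W := fun x => V x + F (x - a))
    p q hVp hFq (fun _ => rfl) hFconv hFeven hF0 hFnonneg
    (fun x => by linarith [hK x, hVgrowth x, hFnonneg (x - a)])
    (fun x hx => by
      simp only [sub_self, hF0, add_zero]
      linarith [hVmin x, hFconv.pos_of_eval_ne_zero hF0 hFnonneg q hFq hq0 (sub_ne_zero.2 hx)])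
  have htwo_div : Tendsto (fun ε : ℝ => 2 / ε) (𝓝[>] 0) atTop := by
    simpa [div_eq_mul_inv] using tendsto_inv_nhdsGT_zero.const_mul_atTop two_pos
  refine (hlim.comp htwo_div).congr fun ε => ?_
  simp only [Function.comp_apply, div_div_cancel₀ (two_ne_zero' ℝ)]
  rfl

theorem stmt17
    (m n : ℕ) (hm : 2 ≤ m) (hn : 1 ≤ n)
    (V F : ℝ → ℝ) (p q : Polynomial ℝ)
    (hVp : ∀ x, V x = p.eval x) (hVdeg : p.natDegree = 2 * m)
    (hVeven : ∀ x, V (-x) = V x) (hV0 : V 0 = 0)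
    (a : ℝ) (ha : 0 < a)
    (hVcrit : ∀ x, deriv V x = 0 ↔ x = -a ∨ x = 0 ∨ x = a)
    (hVa : 0 < deriv (deriv V) a) (hV0'' : deriv (deriv V) 0 < 0)
    (C₂ C₄ : ℝ) (hC₂ : 0 < C₂) (hC₄ : 0 < C₄)
    (hVgrowth : ∀ x, C₄ * x ^ 4 - C₂ * x ^ 2 ≤ V x)
    (hVinfTop : Tendsto (deriv (deriv V)) atTop atTop)
    (hVinfBot : Tendsto (deriv (deriv V)) atBot atTop)
    (hVpos : ∀ x, a ≤ x → 0 < deriv (deriv V) x)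
    (hVconv : ConvexOn ℝ Set.univ (deriv (deriv V)))
    (hFq : ∀ x, F x = q.eval x) (hFdeg : q.natDegree = 2 * n)
    (hFeven : ∀ x, F (-x) = F x) (hF0 : F 0 = 0)
    (hFconv : ConvexOn ℝ Set.univ F)
    (hF''conv : ConvexOn ℝ Set.univ (deriv (deriv F)))
    :
    Tendsto (fun ε : ℝ => freeEnergy V F ε
        (fun x => (∫ y : ℝ, Real.exp (-(2 / ε) * (V y + F (y - a))))⁻¹ *
          Real.exp (-(2 / ε) * (V x + F (x - a)))))
      (𝓝[>] (0 : ℝ)) (𝓝 (V a)) :=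
  stmt17_general n hn V F p q hVp hVeven a hVcrit hV0'' C₂ C₄ hC₄ hVgrowth hFq hFdeg hFeven hF0
    hFconv
end

section
/- Let (U_k) and U be infinitely differentiable functions from ℝ to ℝ such that for every i ∈ ℕ the i-th derivative U_k^{(i)} converges to U^{(i)} uniformly on every compact subset of ℝ as k → ∞. Let (ε_k) be a sequence of positive reals converging to 0. Assume U attains its global minimum exactly at the r points A₁ < ⋯ < A_r, and that there exist R > 0 and k_c such that U_k(x) > x² for all |x| > R and all k > k_c. Then for every N ∈ ℕ there exist nonnegative reals p₁, …, p_r with p₁ + ⋯ + p_r = 1 and a strictly increasing map ψ : ℕ → ℕ such that for every l with 1 ≤ l ≤ N, the ratio (∫_ℝ x^l exp[−(2/ε_{ψ(k)}) U_{ψ(k)}(x)] dx) / (∫_ℝ exp[−(2/ε_{ψ(k)}) U_{ψ(k)}(x)] dx) converges to Σ_{j=1}^r p_j A_j^l as k → ∞. -/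
open MeasureTheory Real Filter Topology

/-- `x^l/l! ≤ exp x` for nonneg `x`. -/
lemma aux_pow_le_exp (l : ℕ) {x : ℝ} (hx : 0 ≤ x) :
    x ^ l / l.factorial ≤ Real.exp x := by
  refine le_trans ?_ (Real.sum_le_exp_of_nonneg hx (l + 1))
  have h : x ^ l / l.factorial = ∑ i ∈ Finset.range (l+1), if i = l then x ^ i / i.factorial else 0 := by
    simp
  rw [h]
  apply Finset.sum_le_sum
  intro i hi
  by_cases h : i = l
  · simp [h]
  · simp only [h, if_false]
    exact div_nonneg (pow_nonneg hx i) (by positivity)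

/-- Integrability of `|x|^l * exp (-x^2)`. -/
lemma aux_integrable_abs_pow (l : ℕ) :
    Integrable (fun x : ℝ => |x| ^ l * Real.exp (-x ^ 2)) := by
  have hint : Integrable (fun x : ℝ => ((2:ℝ) ^ l * l.factorial + 1) * Real.exp (-(1/2) * x ^ 2)) :=
    (integrable_exp_neg_mul_sq (by norm_num : (0:ℝ) < 1/2)).const_mul _
  refine hint.mono' ?_ ?_
  · exact ((continuous_abs.pow l).mul
      (Real.continuous_exp.comp (continuous_pow 2).neg)).aestronglyMeasurable
  · filter_upwards with x
    rw [Real.norm_eq_abs, abs_of_nonneg (by positivity)]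
    have hb : |x| ^ l ≤ 1 + x ^ (2 * l) := by
      have e2 : x ^ (2*l) = |x| ^ (2*l) := by
        rw [pow_mul, pow_mul, sq_abs]
      rw [e2]
      rcases le_total (|x|) 1 with h | h
      · have h' : |x| ^ l ≤ 1 := pow_le_one₀ (abs_nonneg x) h
        have h2 : (0:ℝ) ≤ |x| ^ (2*l) := by positivity
        linarith
      · have h' : |x| ^ l ≤ |x| ^ (2 * l) := pow_le_pow_right₀ h (by omega)
        linarith
    have hc : x ^ (2*l) ≤ 2 ^ l * l.factorial * Real.exp (x^2/2) := by
      have h := aux_pow_le_exp l (x := x^2/2) (by positivity)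
      have e1 : (x^2/2) ^ l = x ^ (2*l) / 2 ^ l := by rw [div_pow, ← pow_mul]
      rw [e1] at h
      have hfac : (0:ℝ) < (2:ℝ) ^ l * l.factorial := by positivity
      calc x ^ (2*l) = (x ^ (2*l) / 2 ^ l / l.factorial) * (2 ^ l * l.factorial) := by
            field_simp
        _ ≤ Real.exp (x^2/2) * (2 ^ l * l.factorial) :=
            mul_le_mul_of_nonneg_right h hfac.le
        _ = 2 ^ l * l.factorial * Real.exp (x^2/2) := by ring
    have key : |x| ^ l ≤ 1 + 2 ^ l * l.factorial * Real.exp (x^2/2) := by linarith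
    calc |x| ^ l * Real.exp (-x^2)
        ≤ (1 + 2 ^ l * l.factorial * Real.exp (x^2/2)) * Real.exp (-x^2) :=
          mul_le_mul_of_nonneg_right key (Real.exp_pos _).le
      _ = Real.exp (-x^2) + 2 ^ l * l.factorial * (Real.exp (x^2/2) * Real.exp (-x^2)) := by
          ring
      _ = Real.exp (-x^2) + 2 ^ l * l.factorial * Real.exp (x^2/2 + -x^2) := by
          rw [Real.exp_add]
      _ ≤ Real.exp (-(1/2) * x^2) + 2 ^ l * l.factorial * Real.exp (-(1/2) * x^2) := by
          have e3 : x^2/2 + -x^2 = -(1/2) * x^2 := by ring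
          rw [e3]
          have e4 : Real.exp (-x^2) ≤ Real.exp (-(1/2) * x^2) := by
            apply Real.exp_le_exp.mpr; nlinarith [sq_nonneg x]
          linarith
      _ = (2 ^ l * l.factorial + 1) * Real.exp (-(1/2) * x ^ 2) := by ring

/-- `|x^l - y^l| ≤ l * M^(l-1) * |x - y|` when `|x|, |y| ≤ M`. -/
lemma aux_pow_lipschitz (l : ℕ) {M x y : ℝ} (hM : 0 ≤ M) (hx : |x| ≤ M) (hy : |y| ≤ M) :
    |x ^ l - y ^ l| ≤ l * M ^ (l - 1) * |x - y| := by
  induction l with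
  | zero => simp
  | succ n ih =>
    have key : x ^ (n+1) - y ^ (n+1) = x ^ n * (x - y) + (x ^ n - y ^ n) * y := by ring
    have h1 : |x ^ n * (x - y)| ≤ M ^ n * |x - y| := by
      rw [abs_mul, abs_pow]
      gcongr
    have h2 : |(x ^ n - y ^ n) * y| ≤ (n * M ^ (n-1) * |x-y|) * M := by
      rw [abs_mul]
      exact mul_le_mul ih hy (abs_nonneg y) (by positivity)
    have h3 : (n : ℝ) * M ^ (n-1) * |x-y| * M ≤ n * M ^ n * |x - y| := by
      apply le_of_eq
      rcases Nat.eq_zero_or_pos n with h | h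
      · simp [h]
      · have e : M ^ (n-1) * M = M ^ n := by
          rw [← pow_succ]
          congr 1
          omega
        calc (n:ℝ) * M ^ (n-1) * |x-y| * M = (n:ℝ) * (M ^ (n-1) * M) * |x-y| := by ring
          _ = (n:ℝ) * M ^ n * |x-y| := by rw [e]
    have hfin : ((n:ℝ) + 1) * M ^ n * |x - y| = (↑(n+1)) * M ^ ((n+1) - 1) * |x - y| := by
      push_cast
      simp
    calc |x ^ (n+1) - y ^ (n+1)| ≤ |x ^ n * (x - y)| + |(x ^ n - y ^ n) * y| := by
          rw [key]; exact abs_add_le _ _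
      _ ≤ M ^ n * |x - y| + (n * M ^ (n-1) * |x-y|) * M := by linarith
      _ ≤ M ^ n * |x - y| + n * M ^ n * |x - y| := by linarith
      _ = ((n:ℝ) + 1) * M ^ n * |x - y| := by ring
      _ = (↑(n+1)) * M ^ ((n+1) - 1) * |x - y| := hfin

set_option maxHeartbeats 1000000 in
theorem stmt18
    (U : ℕ → ℝ → ℝ) (Ulim : ℝ → ℝ)
    (hUk : ∀ k, ContDiff ℝ (⊤ : ℕ∞) (U k)) (hUlim : ContDiff ℝ (⊤ : ℕ∞) Ulim)
    (hconv : ∀ i : ℕ, ∀ K : Set ℝ, IsCompact K →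
      TendstoUniformlyOn (fun k => iteratedDeriv i (U k)) (iteratedDeriv i Ulim) atTop K)
    (ε : ℕ → ℝ) (hεpos : ∀ k, 0 < ε k) (hε0 : Tendsto ε atTop (𝓝 0))
    (r : ℕ) (hr : 0 < r) (A : Fin r → ℝ) (hA : StrictMono A)
    (hmin : ∀ j x, Ulim (A j) ≤ Ulim x)
    (honly : ∀ x, (∀ y, Ulim x ≤ Ulim y) → ∃ j, x = A j)
    (R : ℝ) (hR : 0 < R) (kc : ℕ)
    (hgrowth : ∀ k > kc, ∀ x : ℝ, R < |x| → x ^ 2 < U k x) :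
    ∀ N : ℕ, ∃ pw : Fin r → ℝ,
      (∀ j, 0 ≤ pw j) ∧ (∑ j, pw j) = 1 ∧
      ∃ ψ : ℕ → ℕ, StrictMono ψ ∧
        ∀ l : ℕ, 1 ≤ l → l ≤ N →
          Tendsto (fun k =>
              (∫ x : ℝ, x ^ l * Real.exp (-(2 / ε (ψ k)) * U (ψ k) x)) /
                (∫ x : ℝ, Real.exp (-(2 / ε (ψ k)) * U (ψ k) x)))
            atTop (𝓝 (∑ j, pw j * A j ^ l)) := by
  intro N
  -- the Gibbs density and partition function
  set g : ℕ → ℝ → ℝ := fun k x => Real.exp (-(2 / ε k) * U k x) with hgdef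
  set Z : ℕ → ℝ := fun k => ∫ x : ℝ, g k x with hZdef
  set m : ℝ := Ulim (A ⟨0, hr⟩) with hmdef
  have h1 : ∀ x, m ≤ Ulim x := fun x => hmin _ x
  have h2 : ∀ j, Ulim (A j) = m := fun j => le_antisymm (hmin j _) (h1 _)
  -- pointwise convergence of `U k`
  have hpt : ∀ x, Tendsto (fun k => U k x) atTop (𝓝 (Ulim x)) := by
    intro x
    have h := (hconv 0 {x} isCompact_singleton).tendsto_at (Set.mem_singleton x)
    simpa [iteratedDeriv_zero] using h
  -- tail lower bound on the limit potential
  have htail : ∀ x : ℝ, R < |x| → x ^ 2 ≤ Ulim x := by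
    intro x hx
    refine ge_of_tendsto (hpt x) ?_
    filter_upwards [eventually_gt_atTop kc] with k hk
    exact (hgrowth k hk x hx).le
  -- a big radius
  set R' : ℝ := max R (Real.sqrt (m + 1)) + 1 with hR'def
  have hR'R : R < R' := by
    have := le_max_left R (Real.sqrt (m+1)); linarith
  have hR'1 : 1 ≤ R' := by
    have h0 : (0:ℝ) ≤ Real.sqrt (m+1) := Real.sqrt_nonneg _
    have := le_max_right R (Real.sqrt (m+1)); linarith
  have hR'sq : m + 1 ≤ R' ^ 2 := by
    rcases le_total (m + 1) 0 with h | h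
    · nlinarith
    · have h1' : Real.sqrt (m+1) ≤ R' := by
        have := le_max_right R (Real.sqrt (m+1)); linarith
      have h2' : Real.sqrt (m+1) ^ 2 = m + 1 := Real.sq_sqrt h
      nlinarith [Real.sqrt_nonneg (m+1)]
  have hAR' : ∀ j, |A j| + 1 ≤ R' := by
    intro j
    rcases le_or_gt (|A j|) R with h | h
    · have := le_max_left R (Real.sqrt (m+1)); linarith
    · have h1' : (A j) ^ 2 ≤ m := by
        have := htail (A j) h
        rw [h2 j] at this
        exact this
      have h2' : |A j| ≤ Real.sqrt (m+1) := by
        rw [show |A j| = Real.sqrt ((A j)^2) by rw [Real.sqrt_sq_eq_abs]]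
        apply Real.sqrt_le_sqrt
        linarith
      have := le_max_right R (Real.sqrt (m+1)); linarith
  -- separation of minima
  obtain ⟨δ0, hδ0pos, hδ0le, hδ0sep⟩ :
      ∃ δ0 : ℝ, 0 < δ0 ∧ δ0 ≤ 1 ∧ ∀ i j : Fin r, i ≠ j → 2 * δ0 ≤ |A i - A j| := by
    classical
    set F : Finset (Fin r × Fin r) := Finset.univ.filter (fun p => p.1 ≠ p.2) with hF
    by_cases hFne : F.Nonempty
    · set dm : ℝ := F.inf' hFne (fun p => |A p.1 - A p.2|) with hdm
      have hdmpos : 0 < dm := by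
        rw [hdm, Finset.lt_inf'_iff]
        intro p hp
        have hne : p.1 ≠ p.2 := (Finset.mem_filter.mp hp).2
        have : A p.1 ≠ A p.2 := fun h => hne (hA.injective h)
        exact abs_pos.mpr (sub_ne_zero.mpr this)
      refine ⟨min 1 (dm/2) / 2, by positivity, ?_, ?_⟩
      · have := min_le_left (1:ℝ) (dm/2); linarith
      · intro i j hij
        have hmem : (i, j) ∈ F := by
          rw [hF, Finset.mem_filter]
          exact ⟨Finset.mem_univ _, hij⟩
        have h1' : dm ≤ |A i - A j| := Finset.inf'_le _ hmem
        have := min_le_right (1:ℝ) (dm/2)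
        linarith
    · refine ⟨1, one_pos, le_rfl, ?_⟩
      intro i j hij
      exact absurd (Finset.mem_filter.mpr ⟨Finset.mem_univ (i,j), hij⟩)
        (fun h => hFne ⟨_, h⟩)
  have hball_sub : ∀ (j : Fin r) (d : ℝ), d ≤ δ0 → Metric.ball (A j) d ⊆ Set.Icc (-R') R' := by
    intro j d hd x hx
    rw [Metric.mem_ball, Real.dist_eq] at hx
    have h1' : |x| ≤ |x - A j| + |A j| := by
      have := abs_add_le (x - A j) (A j)
      simpa using this
    have h2' : |x| ≤ R' := by
      have := hAR' j
      linarith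
    exact ⟨by linarith [(abs_le.mp h2').1], (abs_le.mp h2').2⟩
  have hgpos : ∀ k x, 0 < g k x := fun k x => Real.exp_pos _
  -- integrability
  have hInt : ∀ k, kc < k → ε k ≤ 1 → ∀ l : ℕ, Integrable (fun x => |x| ^ l * g k x) := by
    intro k hk hε1 l
    have he2 : (1:ℝ) ≤ 2 / ε k := by
      rw [le_div_iff₀ (hεpos k)]; linarith
    obtain ⟨b, hbmem, hb⟩ := isCompact_Icc.exists_isMinOn
      (Set.nonempty_Icc.mpr (by linarith : -R ≤ R)) (hUk k).continuous.continuousOn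
    set D : ℝ := max (Real.exp (-(2 / ε k) * U k b) * Real.exp (R^2)) 1 with hD
    have hDpos : 0 < D := lt_max_of_lt_right one_pos
    have hbound : ∀ x : ℝ, g k x ≤ D * Real.exp (-x^2) := by
      intro x
      rcases le_or_gt (|x|) R with h | h
      · have hU : U k b ≤ U k x := hb (abs_le.mp h |> fun h' => Set.mem_Icc.mpr h')
        have h1' : g k x ≤ Real.exp (-(2 / ε k) * U k b) := by
          apply Real.exp_le_exp.mpr
          have h2e : 0 < 2 / ε k := by positivity
          nlinarith
        have h2' : Real.exp (-x^2) ≥ Real.exp (-R^2) := by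
          apply Real.exp_le_exp.mpr
          have : x^2 ≤ R^2 := by nlinarith [abs_nonneg x, sq_abs x]
          linarith
        calc g k x ≤ Real.exp (-(2 / ε k) * U k b) := h1'
          _ = Real.exp (-(2 / ε k) * U k b) * Real.exp (R^2) * Real.exp (-R^2) := by
              rw [mul_assoc, ← Real.exp_add]; simp
          _ ≤ D * Real.exp (-x^2) := by
              apply mul_le_mul (le_max_left _ _) (by linarith) (Real.exp_pos _).le hDpos.le
      · have hU : x^2 < U k x := hgrowth k hk x h
        have h1' : g k x ≤ Real.exp (-x^2) := by
          apply Real.exp_le_exp.mpr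
          have h2e : 0 < 2 / ε k := by positivity
          nlinarith [sq_nonneg x]
        calc g k x ≤ Real.exp (-x^2) := h1'
          _ ≤ D * Real.exp (-x^2) := by
              nlinarith [Real.exp_pos (-x^2), le_max_right
                (Real.exp (-(2 / ε k) * U k b) * Real.exp (R^2)) (1:ℝ)]
    have hint : Integrable (fun x : ℝ => D * (|x| ^ l * Real.exp (-x^2))) :=
      (aux_integrable_abs_pow l).const_mul D
    refine hint.mono' ?_ ?_
    · apply Continuous.aestronglyMeasurable
      exact (continuous_abs.pow l).mul
        (Real.continuous_exp.comp (continuous_const.mul (hUk k).continuous))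
    · filter_upwards with x
      rw [Real.norm_eq_abs, abs_of_nonneg (mul_nonneg (by positivity) (hgpos k x).le)]
      calc |x| ^ l * g k x ≤ |x| ^ l * (D * Real.exp (-x^2)) := by
            apply mul_le_mul_of_nonneg_left (hbound x) (by positivity)
        _ = D * (|x| ^ l * Real.exp (-x^2)) := by ring
  have hIntg : ∀ k, kc < k → ε k ≤ 1 → Integrable (g k) := by
    intro k hk hε1
    have := hInt k hk hε1 0
    simpa using this
  have hIntx : ∀ k, kc < k → ε k ≤ 1 → ∀ l : ℕ, Integrable (fun x => x ^ l * g k x) := by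
    intro k hk hε1 l
    refine (hInt k hk hε1 l).mono' ?_ ?_
    · apply Continuous.aestronglyMeasurable
      exact (continuous_pow l).mul
        (Real.continuous_exp.comp (continuous_const.mul (hUk k).continuous))
    · filter_upwards with x
      rw [Real.norm_eq_abs, abs_mul, abs_pow, abs_of_nonneg (hgpos k x).le]
  -- the main concentration estimate
  have main : ∀ δ' : ℝ, 0 < δ' → δ' ≤ δ0 → ∀ l : ℕ, ∃ c η : ℝ, 0 < η ∧
      ∀ᶠ k in atTop, kc < k ∧ ε k ≤ 1 ∧ 0 < Z k ∧
        (∫ x in (⋃ j, Metric.ball (A j) δ')ᶜ, |x| ^ l * g k x) / Z k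
          ≤ c * Real.exp (-(η / ε k)) := by
    intro δ' hδ'pos hδ'le l
    have hWopen : IsOpen (⋃ j, Metric.ball (A j) δ') :=
      isOpen_iUnion (fun j => Metric.isOpen_ball)
    have hWsub : (⋃ j, Metric.ball (A j) δ') ⊆ Set.Icc (-R') R' :=
      Set.iUnion_subset (fun j => hball_sub j δ' hδ'le)
    set S : Set ℝ := Set.Icc (-R') R' \ (⋃ j, Metric.ball (A j) δ') with hSdef
    have hScomp : IsCompact S := isCompact_Icc.diff hWopen
    have hSmeas : MeasurableSet S := measurableSet_Icc.diff hWopen.measurableSet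
    have hSgt : ∀ x ∈ S, m < Ulim x := by
      intro x hx
      rcases lt_or_ge m (Ulim x) with h | h
      · exact h
      · exfalso
        have hxmin : ∀ y, Ulim x ≤ Ulim y := fun y => le_trans h (h1 y)
        obtain ⟨j, rfl⟩ := honly x hxmin
        exact hx.2 (Set.mem_iUnion.mpr ⟨j, Metric.mem_ball_self hδ'pos⟩)
    obtain ⟨η, hηpos, hη14, hηS⟩ :
        ∃ η : ℝ, 0 < η ∧ η ≤ 1/4 ∧ ∀ x ∈ S, m + 3*η ≤ Ulim x := by
      rcases S.eq_empty_or_nonempty with hS | hS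
      · refine ⟨1/4, by norm_num, le_rfl, ?_⟩
        intro x hx
        rw [hS] at hx
        exact absurd hx (Set.notMem_empty x)
      · obtain ⟨x₀, hx₀S, hx₀min⟩ := hScomp.exists_isMinOn hS hUlim.continuous.continuousOn
        have hgt := hSgt x₀ hx₀S
        refine ⟨min (1/4) ((Ulim x₀ - m)/3), lt_min (by norm_num) (by linarith),
          min_le_left _ _, ?_⟩
        intro x hx
        have h1'' : Ulim x₀ ≤ Ulim x := hx₀min hx
        have h2'' := min_le_right (1/4:ℝ) ((Ulim x₀ - m)/3)
        linarith
    have hunif : ∀ᶠ k in atTop, ∀ x ∈ Set.Icc (-R') R', |Ulim x - U k x| < η/2 := by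
      have h := (Metric.tendstoUniformlyOn_iff.mp
        (hconv 0 (Set.Icc (-R') R') isCompact_Icc)) (η/2) (by linarith)
      filter_upwards [h] with k hk x hx
      have := hk x hx
      simpa [iteratedDeriv_zero, Real.dist_eq] using this
    set A0 : ℝ := A ⟨0, hr⟩ with hA0
    have hUA0 : Ulim A0 = m := by rw [hmdef]
    obtain ⟨t, htpos, htle, hIUlim⟩ : ∃ t : ℝ, 0 < t ∧ t < δ' ∧
        ∀ x ∈ Set.Icc (A0 - t) (A0 + t), Ulim x < m + η := by
      have hc : ContinuousAt Ulim A0 := hUlim.continuous.continuousAt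
      obtain ⟨d, hdpos, hd⟩ := Metric.continuousAt_iff.mp hc η hηpos
      refine ⟨min (d/2) (δ'/2), by positivity,
        by linarith [min_le_right (d/2) (δ'/2)], ?_⟩
      intro x hx
      have hxt : |x - A0| ≤ min (d/2) (δ'/2) :=
        abs_le.mpr ⟨by linarith [hx.1], by linarith [hx.2]⟩
      have hdist : dist x A0 < d := by
        rw [Real.dist_eq]
        have := min_le_left (d/2) (δ'/2)
        linarith
      have := hd hdist
      rw [Real.dist_eq, hUA0] at this
      linarith [(abs_lt.mp this).2]
    have hIsub : Set.Icc (A0 - t) (A0 + t) ⊆ Set.Icc (-R') R' := by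
      intro x hx
      apply hball_sub ⟨0, hr⟩ δ' hδ'le
      rw [Metric.mem_ball, Real.dist_eq]
      exact lt_of_le_of_lt (abs_le.mpr ⟨by linarith [hx.1], by linarith [hx.2]⟩) htle
    set Cl : ℝ := ∫ x : ℝ, |x| ^ l * Real.exp (-x^2) with hCldef
    have hClnn : 0 ≤ Cl := integral_nonneg (fun x => by positivity)
    refine ⟨(2*R'*R'^l + Cl) / (2*t), 2*η, by linarith, ?_⟩
    have hεev : ∀ᶠ k in atTop, ε k < (2*R'^2)⁻¹ :=
      hε0.eventually_lt_const (by positivity)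
    filter_upwards [eventually_gt_atTop kc, hunif, hεev] with k hkc hu hεs
    have hR'2 : (1:ℝ) ≤ R'^2 := by nlinarith
    have hε1 : ε k ≤ 1 := by
      have h2'' : (2*R'^2)⁻¹ ≤ 1 := by
        rw [inv_le_one_iff₀]
        right; linarith
      linarith
    have he2pos : (0:ℝ) < 2 / ε k := div_pos two_pos (hεpos k)
    have he2ge2 : 2 ≤ 2 / ε k := by rw [le_div_iff₀ (hεpos k)]; linarith
    have he2big : 4 * R'^2 ≤ 2 / ε k := by
      rw [le_div_iff₀ (hεpos k)]
      calc 4*R'^2 * ε k ≤ 4*R'^2 * (2*R'^2)⁻¹ := by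
            apply mul_le_mul_of_nonneg_left hεs.le (by positivity)
        _ = 2 := by
            field_simp
            ring
    have hUk_up : ∀ x ∈ Set.Icc (A0-t) (A0+t), U k x ≤ m + (3/2)*η := by
      intro x hx
      have h1'' := abs_lt.mp (hu x (hIsub hx))
      have h2'' := hIUlim x hx
      linarith [h1''.1]
    have hUk_S : ∀ x ∈ S, m + (5/2)*η ≤ U k x := by
      intro x hx
      have h1'' := abs_lt.mp (hu x hx.1)
      have h2'' := hηS x hx
      linarith [h1''.2]
    -- lower bound on the partition function
    have hZlow : 2*t * Real.exp (-((2/ε k) * (m + (3/2)*η))) ≤ Z k := by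
      have hstep : ∀ x ∈ Set.Icc (A0-t) (A0+t),
          Real.exp (-((2/ε k) * (m + (3/2)*η))) ≤ g k x := by
        intro x hx
        have hb := hUk_up x hx
        simp only [hgdef]
        apply Real.exp_le_exp.mpr
        nlinarith
      have e1 : A0 + t - (A0 - t) = 2*t := by ring
      calc 2*t * Real.exp (-((2/ε k) * (m + (3/2)*η)))
          = (volume (Set.Icc (A0-t) (A0+t))).toReal
            * Real.exp (-((2/ε k) * (m + (3/2)*η))) := by
            rw [Real.volume_Icc, e1, ENNReal.toReal_ofReal (by linarith)]
        _ = ∫ _x in Set.Icc (A0-t) (A0+t), Real.exp (-((2/ε k) * (m + (3/2)*η))) := by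
            rw [setIntegral_const, smul_eq_mul]; rfl
        _ ≤ ∫ x in Set.Icc (A0-t) (A0+t), g k x := by
            apply setIntegral_mono_on
              (integrableOn_const measure_Icc_lt_top.ne)
              ((hIntg k hkc hε1).integrableOn) measurableSet_Icc hstep
        _ ≤ Z k := setIntegral_le_integral (hIntg k hkc hε1)
              (Eventually.of_forall fun x => (hgpos k x).le)
    have hZpos' : 0 < Z k := lt_of_lt_of_le (by positivity) hZlow
    -- bound on the compact part away from the wells
    have hgS : ∀ x ∈ S, |x|^l * g k x ≤ R'^l * Real.exp (-((2/ε k)*(m + (5/2)*η))) := by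
      intro x hx
      have hxR : |x| ≤ R' := abs_le.mpr ⟨hx.1.1, hx.1.2⟩
      have hgb : g k x ≤ Real.exp (-((2/ε k)*(m + (5/2)*η))) := by
        have hb := hUk_S x hx
        simp only [hgdef]
        apply Real.exp_le_exp.mpr
        nlinarith
      exact mul_le_mul (pow_le_pow_left₀ (abs_nonneg x) hxR l) hgb (hgpos k x).le
        (by positivity)
    have hvolS : (volume S).toReal ≤ 2 * R' := by
      have hvol : volume S ≤ volume (Set.Icc (-R') R') := measure_mono Set.diff_subset
      have h1'' : (volume S).toReal ≤ (volume (Set.Icc (-R') R')).toReal :=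
        ENNReal.toReal_mono (ne_of_lt measure_Icc_lt_top) hvol
      rw [Real.volume_Icc, ENNReal.toReal_ofReal (by linarith)] at h1''
      linarith
    have hSbound : (∫ x in S, |x|^l * g k x)
        ≤ 2*R' * R'^l * Real.exp (-((2/ε k)*(m + (5/2)*η))) := by
      have hfin : volume S < ⊤ :=
        lt_of_le_of_lt (measure_mono Set.diff_subset) measure_Icc_lt_top
      have hnorm := norm_setIntegral_le_of_norm_le_const (f := fun x => |x|^l * g k x) hfin
        (C := R'^l * Real.exp (-((2/ε k)*(m + (5/2)*η))))
        (fun x hx => by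
          rw [Real.norm_eq_abs, abs_of_nonneg (mul_nonneg (by positivity) (hgpos k x).le)]
          exact hgS x hx)
      have h2'' : (∫ x in S, |x|^l * g k x) ≤ ‖∫ x in S, |x|^l * g k x‖ :=
        le_abs_self _
      have h3'' : R'^l * Real.exp (-((2/ε k)*(m + (5/2)*η))) * (volume S).toReal
          ≤ R'^l * Real.exp (-((2/ε k)*(m + (5/2)*η))) * (2*R') := by
        apply mul_le_mul_of_nonneg_left hvolS (by positivity)
      calc (∫ x in S, |x|^l * g k x)
          ≤ R'^l * Real.exp (-((2/ε k)*(m + (5/2)*η))) * (volume S).toReal :=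
            h2''.trans hnorm
        _ ≤ R'^l * Real.exp (-((2/ε k)*(m + (5/2)*η))) * (2*R') := h3''
        _ = 2*R' * R'^l * Real.exp (-((2/ε k)*(m + (5/2)*η))) := by ring
    -- tail bound
    have htailpt : ∀ x ∈ (Set.Icc (-R') R')ᶜ,
        |x|^l * g k x ≤ Real.exp (-((2/ε k)*(m + (5/2)*η))) * (|x|^l * Real.exp (-x^2)) := by
      intro x hx
      have hxR : R' < |x| := by
        simp only [Set.mem_compl_iff, Set.mem_Icc, not_and, not_le] at hx
        rw [lt_abs]
        by_cases hcs : -R' ≤ x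
        · left; exact hx hcs
        · right; push_neg at hcs; linarith
      have hxsq : R'^2 ≤ x^2 := by nlinarith [abs_nonneg x, sq_abs x]
      have hU : x^2 < U k x := hgrowth k hkc x (lt_trans hR'R hxR)
      have hexpb : g k x ≤ Real.exp (-((2/ε k)*(m + (5/2)*η)) + -x^2) := by
        simp only [hgdef]
        apply Real.exp_le_exp.mpr
        nlinarith [he2big, he2ge2, hxsq, hR'2]
      calc |x|^l * g k x
          ≤ |x|^l * (Real.exp (-((2/ε k)*(m + (5/2)*η))) * Real.exp (-x^2)) := by
            rw [← Real.exp_add]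
            exact mul_le_mul_of_nonneg_left hexpb (by positivity)
        _ = Real.exp (-((2/ε k)*(m + (5/2)*η))) * (|x|^l * Real.exp (-x^2)) := by ring
    have htailbound : (∫ x in (Set.Icc (-R') R')ᶜ, |x|^l * g k x)
        ≤ Real.exp (-((2/ε k)*(m + (5/2)*η))) * Cl := by
      calc (∫ x in (Set.Icc (-R') R')ᶜ, |x|^l * g k x)
          ≤ ∫ x in (Set.Icc (-R') R')ᶜ,
              Real.exp (-((2/ε k)*(m + (5/2)*η))) * (|x|^l * Real.exp (-x^2)) := by
            apply setIntegral_mono_on ((hInt k hkc hε1 l).integrableOn)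
              (((aux_integrable_abs_pow l).const_mul _).integrableOn)
              measurableSet_Icc.compl htailpt
        _ = Real.exp (-((2/ε k)*(m + (5/2)*η)))
            * ∫ x in (Set.Icc (-R') R')ᶜ, |x|^l * Real.exp (-x^2) := by
            rw [MeasureTheory.integral_const_mul]
        _ ≤ Real.exp (-((2/ε k)*(m + (5/2)*η))) * Cl := by
            apply mul_le_mul_of_nonneg_left _ (Real.exp_pos _).le
            rw [hCldef]
            exact setIntegral_le_integral (aux_integrable_abs_pow l)
              (Eventually.of_forall (fun x => by positivity))
    -- split the outside integral
    have hsplit : (∫ x in (⋃ j, Metric.ball (A j) δ')ᶜ, |x|^l * g k x)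
        = (∫ x in S, |x|^l * g k x) + (∫ x in (Set.Icc (-R') R')ᶜ, |x|^l * g k x) := by
      have h1'' : (⋃ j, Metric.ball (A j) δ')ᶜ ∩ Set.Icc (-R') R' = S := by
        rw [hSdef, Set.diff_eq, Set.inter_comm]
      have h2'' : (⋃ j, Metric.ball (A j) δ')ᶜ \ Set.Icc (-R') R'
          = (Set.Icc (-R') R')ᶜ := by
        ext x
        simp only [Set.mem_diff, Set.mem_compl_iff]
        constructor
        · exact fun h => h.2
        · exact fun h => ⟨fun hw => h (hWsub hw), h⟩
      rw [← h1'', ← h2'']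
      exact (integral_inter_add_diff measurableSet_Icc
        ((hInt k hkc hε1 l).integrableOn)).symm
    have hOut : (∫ x in (⋃ j, Metric.ball (A j) δ')ᶜ, |x|^l * g k x)
        ≤ (2*R'*R'^l + Cl) * Real.exp (-((2/ε k)*(m + (5/2)*η))) := by
      rw [hsplit]
      calc (∫ x in S, |x|^l * g k x) + (∫ x in (Set.Icc (-R') R')ᶜ, |x|^l * g k x)
          ≤ 2*R' * R'^l * Real.exp (-((2/ε k)*(m + (5/2)*η)))
            + Real.exp (-((2/ε k)*(m + (5/2)*η))) * Cl := add_le_add hSbound htailbound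
        _ = (2*R'*R'^l + Cl) * Real.exp (-((2/ε k)*(m + (5/2)*η))) := by ring
    refine ⟨hkc, hε1, hZpos', ?_⟩
    have hq' : (∫ x in (⋃ j, Metric.ball (A j) δ')ᶜ, |x|^l * g k x) / Z k
        ≤ ((2*R'*R'^l + Cl) * Real.exp (-((2/ε k)*(m + (5/2)*η))))
          / (2*t * Real.exp (-((2/ε k) * (m + (3/2)*η)))) :=
      div_le_div₀ (by positivity) hOut (by positivity) hZlow
    refine hq'.trans (le_of_eq ?_)
    have hE : Real.exp (-((2/ε k)*(m + (5/2)*η)))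
        / Real.exp (-((2/ε k) * (m + (3/2)*η))) = Real.exp (-(2*η / ε k)) := by
      rw [← Real.exp_sub]
      congr 1
      field_simp
      ring
    calc ((2*R'*R'^l + Cl) * Real.exp (-((2/ε k)*(m + (5/2)*η))))
          / (2*t * Real.exp (-((2/ε k) * (m + (3/2)*η))))
        = ((2*R'*R'^l + Cl) / (2*t))
          * (Real.exp (-((2/ε k)*(m + (5/2)*η)))
            / Real.exp (-((2/ε k) * (m + (3/2)*η)))) := by ring
      _ = (2*R'*R'^l + Cl) / (2*t) * Real.exp (-(2*η / ε k)) := by rw [hE]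
  have hexp0 : ∀ η : ℝ, 0 < η → Tendsto (fun k => Real.exp (-(η / ε k))) atTop (𝓝 0) := by
    intro η hη
    have h1' : Tendsto ε atTop (𝓝[>] 0) :=
      tendsto_nhdsWithin_iff.mpr ⟨hε0, Eventually.of_forall (fun k => hεpos k)⟩
    have h2' : Tendsto (fun k => (ε k)⁻¹) atTop atTop := tendsto_inv_nhdsGT_zero.comp h1'
    have h3' : Tendsto (fun k => η / ε k) atTop atTop := by
      simp only [div_eq_mul_inv]
      exact h2'.const_mul_atTop hη
    have h4' : Tendsto (fun k => -(η / ε k)) atTop atBot := tendsto_neg_atTop_atBot.comp h3'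
    exact Real.tendsto_exp_atBot.comp h4'
  have conc : ∀ δ' : ℝ, 0 < δ' → δ' ≤ δ0 → ∀ l : ℕ,
      Tendsto (fun k => (∫ x in (⋃ j, Metric.ball (A j) δ')ᶜ, |x| ^ l * g k x) / Z k)
        atTop (𝓝 0) := by
    intro δ' hδ'pos hδ'le l
    obtain ⟨c, η, hη, hev⟩ := main δ' hδ'pos hδ'le l
    have hupper : Tendsto (fun k => c * Real.exp (-(η / ε k))) atTop (𝓝 0) := by
      have := (hexp0 η hη).const_mul c
      simpa using this
    refine tendsto_of_tendsto_of_tendsto_of_le_of_le' tendsto_const_nhds hupper ?_ ?_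
    · filter_upwards [hev] with k hk
      apply div_nonneg _ hk.2.2.1.le
      apply integral_nonneg
      intro x
      exact mul_nonneg (by positivity) (hgpos k x).le
    · filter_upwards [hev] with k hk
      exact hk.2.2.2
  have hZpos : ∀ᶠ k in atTop, kc < k ∧ ε k ≤ 1 ∧ 0 < Z k := by
    obtain ⟨c, η, hη, h⟩ := main δ0 hδ0pos le_rfl 0
    filter_upwards [h] with k hk
    exact ⟨hk.1, hk.2.1, hk.2.2.1⟩
  -- well masses
  set q : Fin r → ℕ → ℝ := fun j k => (∫ x in Metric.ball (A j) δ0, g k x) / Z k with hqdef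
  have hq01 : ∀ j k, q j k ∈ Set.Icc (0:ℝ) 1 := by
    intro j k
    have hnum : 0 ≤ ∫ x in Metric.ball (A j) δ0, g k x :=
      integral_nonneg (fun x => (hgpos k x).le)
    constructor
    · apply div_nonneg hnum
      exact integral_nonneg (fun x => (hgpos k x).le)
    · by_cases hig : Integrable (g k)
      · have hle : (∫ x in Metric.ball (A j) δ0, g k x) ≤ Z k :=
          setIntegral_le_integral hig (Eventually.of_forall (fun x => (hgpos k x).le))
        rcases lt_or_ge 0 (Z k) with hZ | hZ
        · rw [div_le_one hZ]; exact hle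
        · have hZ0 : Z k = 0 :=
            le_antisymm hZ (integral_nonneg (fun x => (hgpos k x).le))
          rw [hqdef]
          simp only [hZ0, div_zero]
          norm_num
      · have hZ0 : Z k = 0 := integral_undef hig
        rw [hqdef]
        simp only [hZ0, div_zero]
        norm_num
  have hqsum : Tendsto (fun k => ∑ j, q j k) atTop (𝓝 1) := by
    have hconc0 : Tendsto
        (fun k => (∫ x in (⋃ j, Metric.ball (A j) δ0)ᶜ, g k x) / Z k) atTop (𝓝 0) := by
      have := conc δ0 hδ0pos le_rfl 0
      simpa using this
    have h1' : Tendsto (fun k => 1 - (∫ x in (⋃ j, Metric.ball (A j) δ0)ᶜ, g k x) / Z k)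
        atTop (𝓝 1) := by
      have := (tendsto_const_nhds :
        Tendsto (fun _ : ℕ => (1:ℝ)) atTop (𝓝 1)).sub hconc0
      simpa using this
    refine h1'.congr' ?_
    filter_upwards [hZpos] with k hk
    obtain ⟨hkc, hε1, hZ⟩ := hk
    have hmeas : ∀ j : Fin r, MeasurableSet (Metric.ball (A j) δ0) :=
      fun j => measurableSet_ball
    have hdisj : Pairwise (Function.onFun Disjoint (fun j => Metric.ball (A j) δ0)) := by
      intro i j hij
      apply Metric.ball_disjoint_ball
      rw [Real.dist_eq]
      have := hδ0sep i j hij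
      linarith
    have hW : (∫ x in ⋃ j, Metric.ball (A j) δ0, g k x)
        = ∑ j, ∫ x in Metric.ball (A j) δ0, g k x :=
      integral_iUnion_fintype hmeas hdisj (fun j => (hIntg k hkc hε1).integrableOn)
    have hsplit : (∫ x in ⋃ j, Metric.ball (A j) δ0, g k x)
        + (∫ x in (⋃ j, Metric.ball (A j) δ0)ᶜ, g k x) = Z k :=
      integral_add_compl (MeasurableSet.iUnion hmeas) (hIntg k hkc hε1)
    have hqs : (∑ j, q j k) = (∫ x in ⋃ j, Metric.ball (A j) δ0, g k x) / Z k := by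
      rw [hqdef, hW, Finset.sum_div]
    have hZne : Z k ≠ 0 := ne_of_gt hZ
    have hout : (∫ x in (⋃ j, Metric.ball (A j) δ0)ᶜ, g k x)
        = Z k - ∫ x in ⋃ j, Metric.ball (A j) δ0, g k x := by linarith
    rw [hqs, hout, sub_div, div_self hZne, sub_sub_cancel]
  -- Bolzano–Weierstrass
  obtain ⟨pw, hpwcl, φ, hφ, hφconv⟩ :
      ∃ a ∈ closure (Metric.closedBall (0 : Fin r → ℝ) 1), ∃ φ : ℕ → ℕ, StrictMono φ ∧
        Tendsto ((fun k => fun j => q j k) ∘ φ) atTop (𝓝 a) := by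
    apply tendsto_subseq_of_bounded Metric.isBounded_closedBall
    intro k
    rw [Metric.mem_closedBall, dist_zero_right]
    rw [pi_norm_le_iff_of_nonneg (by norm_num)]
    intro j
    rw [Real.norm_eq_abs, abs_le]
    constructor
    · linarith [(hq01 j k).1]
    · exact (hq01 j k).2
  have hcoord : ∀ j, Tendsto (fun k => q j (φ k)) atTop (𝓝 (pw j)) := by
    intro j
    have := (tendsto_pi_nhds.mp hφconv) j
    exact this
  have hpw0 : ∀ j, 0 ≤ pw j := by
    intro j
    exact le_of_tendsto_of_tendsto' tendsto_const_nhds (hcoord j) (fun k => (hq01 j (φ k)).1)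
  have hpwsum : (∑ j, pw j) = 1 := by
    have h1' : Tendsto (fun k => ∑ j, q j (φ k)) atTop (𝓝 (∑ j, pw j)) :=
      tendsto_finset_sum _ (fun j _ => hcoord j)
    have h2' : Tendsto (fun k => ∑ j, q j (φ k)) atTop (𝓝 1) :=
      hqsum.comp (hφ.tendsto_atTop)
    exact tendsto_nhds_unique h1' h2'
  refine ⟨pw, hpw0, hpwsum, φ, hφ, ?_⟩
  intro l hl1 hlN
  have hR'pos : (0:ℝ) < R' := by linarith
  have hfinal : Tendsto (fun k => (∫ x : ℝ, x ^ l * g (φ k) x) / Z (φ k)) atTop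
      (𝓝 (∑ j, pw j * A j ^ l)) := by
    rw [Metric.tendsto_nhds]
    intro e he
    set Cerr : ℝ := (l : ℝ) * R' ^ (l-1) + 1 with hCerrdef
    have hCerrpos : 0 < Cerr := by
      have : (0:ℝ) ≤ (l : ℝ) * R' ^ (l-1) :=
        mul_nonneg (Nat.cast_nonneg l) (pow_nonneg hR'pos.le _)
      linarith
    set δ' : ℝ := min δ0 (e / (4 * Cerr)) with hδ'def
    have hδ'pos : 0 < δ' := lt_min hδ0pos (div_pos he (by linarith))
    have hδ'le : δ' ≤ δ0 := min_le_left _ _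
    have hδ'e : Cerr * δ' ≤ e/4 := by
      have h1'' : δ' ≤ e/(4*Cerr) := min_le_right _ _
      have heq : Cerr * (e/(4*Cerr)) = e/4 := by
        field_simp
      nlinarith
    -- the key eventual inequality along the full sequence
    have key : ∀ᶠ k in atTop,
        |(∫ x : ℝ, x ^ l * g k x) / Z k - ∑ j, A j ^ l * q j k|
          ≤ Cerr * δ'
            + (∫ x in (⋃ j, Metric.ball (A j) δ')ᶜ, |x| ^ l * g k x) / Z k
            + (r : ℝ) * R' ^ l
              * ((∫ x in (⋃ j, Metric.ball (A j) δ')ᶜ, |x| ^ 0 * g k x) / Z k) := by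
      filter_upwards [hZpos] with k hk
      obtain ⟨hkc, hε1, hZk⟩ := hk
      have hZne : Z k ≠ 0 := ne_of_gt hZk
      have hIx : Integrable (fun x => x ^ l * g k x) := hIntx k hkc hε1 l
      have hIg : Integrable (g k) := hIntg k hkc hε1
      have hIabs : Integrable (fun x => |x| ^ l * g k x) := hInt k hkc hε1 l
      have hmeasB : ∀ j : Fin r, MeasurableSet (Metric.ball (A j) δ') :=
        fun j => measurableSet_ball
      have hdisj : Pairwise (Function.onFun Disjoint (fun j => Metric.ball (A j) δ')) := by
        intro i j hij
        apply Metric.ball_disjoint_ball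
        rw [Real.dist_eq]
        have := hδ0sep i j hij
        linarith
      have hsum1 : (∫ x in ⋃ j, Metric.ball (A j) δ', x ^ l * g k x)
          = ∑ j, ∫ x in Metric.ball (A j) δ', x ^ l * g k x :=
        integral_iUnion_fintype hmeasB hdisj (fun j => hIx.integrableOn)
      have hsplit : (∫ x in ⋃ j, Metric.ball (A j) δ', x ^ l * g k x)
          + (∫ x in (⋃ j, Metric.ball (A j) δ')ᶜ, x ^ l * g k x)
          = (∫ x : ℝ, x ^ l * g k x) :=
        integral_add_compl (MeasurableSet.iUnion hmeasB) hIx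
      -- per-well error estimate
      have hwell : ∀ j : Fin r,
          |(∫ x in Metric.ball (A j) δ', x ^ l * g k x)
            - A j ^ l * ∫ x in Metric.ball (A j) δ', g k x|
          ≤ Cerr * δ' * ∫ x in Metric.ball (A j) δ', g k x := by
        intro j
        have hfun : (fun x => (x ^ l - A j ^ l) * g k x)
            = fun x => x ^ l * g k x - A j ^ l * g k x := funext (fun x => by ring)
        have hIsub : IntegrableOn (fun x => (x ^ l - A j ^ l) * g k x)
            (Metric.ball (A j) δ') := by
          rw [hfun]
          exact hIx.integrableOn.sub ((hIg.integrableOn).const_mul _)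
        have he1 : (∫ x in Metric.ball (A j) δ', (x ^ l - A j ^ l) * g k x)
            = (∫ x in Metric.ball (A j) δ', x ^ l * g k x)
              - A j ^ l * ∫ x in Metric.ball (A j) δ', g k x := by
          rw [hfun, integral_sub hIx.integrableOn ((hIg.integrableOn).const_mul _),
            MeasureTheory.integral_const_mul]
        rw [← he1]
        have hptw : ∀ x ∈ Metric.ball (A j) δ',
            ‖(x ^ l - A j ^ l) * g k x‖ ≤ Cerr * δ' * g k x := by
          intro x hx
          have hxIcc := hball_sub j δ' hδ'le hx
          have hxR : |x| ≤ R' := abs_le.mpr ⟨hxIcc.1, hxIcc.2⟩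
          have hAjR : |A j| ≤ R' := by linarith [hAR' j]
          have hd : |x - A j| ≤ δ' := by
            rw [Metric.mem_ball, Real.dist_eq] at hx
            exact hx.le
          have hlip := aux_pow_lipschitz l hR'pos.le hxR hAjR
          have h2'' : |x ^ l - A j ^ l| ≤ Cerr * δ' := by
            have h3'' : (l:ℝ) * R' ^ (l-1) * |x - A j| ≤ (l:ℝ) * R' ^ (l-1) * δ' :=
              mul_le_mul_of_nonneg_left hd
                (mul_nonneg (Nat.cast_nonneg l) (pow_nonneg hR'pos.le _))
            have h4'' : (l:ℝ) * R' ^ (l-1) * δ' ≤ Cerr * δ' := by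
              apply mul_le_mul_of_nonneg_right _ hδ'pos.le
              rw [hCerrdef]
              linarith
            linarith
          rw [Real.norm_eq_abs, abs_mul, abs_of_nonneg (hgpos k x).le]
          exact mul_le_mul_of_nonneg_right h2'' (hgpos k x).le
        calc |∫ x in Metric.ball (A j) δ', (x ^ l - A j ^ l) * g k x|
            ≤ ∫ x in Metric.ball (A j) δ', ‖(x ^ l - A j ^ l) * g k x‖ := by
              rw [← Real.norm_eq_abs]
              exact norm_integral_le_integral_norm _
          _ ≤ ∫ x in Metric.ball (A j) δ', Cerr * δ' * g k x := by
              apply setIntegral_mono_on hIsub.norm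
                ((hIg.integrableOn).const_mul _) measurableSet_ball hptw
          _ = Cerr * δ' * ∫ x in Metric.ball (A j) δ', g k x := by
              rw [MeasureTheory.integral_const_mul]
      -- the sum of the well masses is at most Z
      have hsumg : (∫ x in ⋃ j, Metric.ball (A j) δ', g k x)
          = ∑ j, ∫ x in Metric.ball (A j) δ', g k x :=
        integral_iUnion_fintype hmeasB hdisj (fun j => hIg.integrableOn)
      have hWle : (∑ j, ∫ x in Metric.ball (A j) δ', g k x) ≤ Z k := by
        rw [← hsumg]
        exact setIntegral_le_integral hIg (Eventually.of_forall fun x => (hgpos k x).le)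
      have hT1 : |(∑ j, ∫ x in Metric.ball (A j) δ', x ^ l * g k x)
          - ∑ j, A j ^ l * ∫ x in Metric.ball (A j) δ', g k x| ≤ Cerr * δ' * Z k := by
        rw [← Finset.sum_sub_distrib]
        calc |∑ j, ((∫ x in Metric.ball (A j) δ', x ^ l * g k x)
              - A j ^ l * ∫ x in Metric.ball (A j) δ', g k x)|
            ≤ ∑ j, |(∫ x in Metric.ball (A j) δ', x ^ l * g k x)
              - A j ^ l * ∫ x in Metric.ball (A j) δ', g k x| :=
              Finset.abs_sum_le_sum_abs _ _
          _ ≤ ∑ j, Cerr * δ' * ∫ x in Metric.ball (A j) δ', g k x :=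
              Finset.sum_le_sum (fun j _ => hwell j)
          _ = Cerr * δ' * ∑ j, ∫ x in Metric.ball (A j) δ', g k x := by
              rw [Finset.mul_sum]
          _ ≤ Cerr * δ' * Z k :=
              mul_le_mul_of_nonneg_left hWle (by positivity)
      -- the annulus estimate
      have hann : ∀ j : Fin r,
          Metric.ball (A j) δ0 \ Metric.ball (A j) δ'
            ⊆ (⋃ i, Metric.ball (A i) δ')ᶜ := by
        intro j x hx
        simp only [Set.mem_compl_iff, Set.mem_iUnion, not_exists]
        intro i hxi
        rcases eq_or_ne i j with rfl | hij
        · exact hx.2 hxi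
        · have hsep := hδ0sep i j hij
          rw [Metric.mem_ball, Real.dist_eq] at hxi
          have hx1 : |x - A j| < δ0 := by
            have := hx.1
            rw [Metric.mem_ball, Real.dist_eq] at this
            exact this
          have htri : |A i - A j| ≤ |A i - x| + |x - A j| := abs_sub_le _ _ _
          rw [abs_sub_comm (A i) x] at htri
          linarith
      have hO0 : ∀ j : Fin r,
          q j k - (∫ x in Metric.ball (A j) δ', g k x) / Z k
            ∈ Set.Icc 0 ((∫ x in (⋃ i, Metric.ball (A i) δ')ᶜ, g k x) / Z k) := by
        intro j
        have hss : Metric.ball (A j) δ' ⊆ Metric.ball (A j) δ0 :=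
          Metric.ball_subset_ball hδ'le
        have hdiff : (∫ x in Metric.ball (A j) δ0 \ Metric.ball (A j) δ', g k x)
            = (∫ x in Metric.ball (A j) δ0, g k x)
              - ∫ x in Metric.ball (A j) δ', g k x :=
          integral_diff measurableSet_ball hIg.integrableOn hss
        have hnn : (0:ℝ) ≤ ∫ x in Metric.ball (A j) δ0 \ Metric.ball (A j) δ', g k x :=
          integral_nonneg (fun x => (hgpos k x).le)
        have hub : (∫ x in Metric.ball (A j) δ0 \ Metric.ball (A j) δ', g k x)
            ≤ ∫ x in (⋃ i, Metric.ball (A i) δ')ᶜ, g k x :=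
          setIntegral_mono_set hIg.integrableOn
            (Eventually.of_forall fun x => (hgpos k x).le)
            (HasSubset.Subset.eventuallyLE (hann j))
        have hqval : q j k - (∫ x in Metric.ball (A j) δ', g k x) / Z k
            = (∫ x in Metric.ball (A j) δ0 \ Metric.ball (A j) δ', g k x) / Z k := by
          simp only [hqdef]
          rw [hdiff, sub_div]
        rw [hqval]
        constructor
        · exact div_nonneg hnn hZk.le
        · exact (div_le_div_iff_of_pos_right hZk).mpr hub
      -- assemble
      have hiden : (∫ x : ℝ, x ^ l * g k x) / Z k - ∑ j, A j ^ l * q j k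
          = ((∑ j, ∫ x in Metric.ball (A j) δ', x ^ l * g k x)
              - ∑ j, A j ^ l * ∫ x in Metric.ball (A j) δ', g k x) / Z k
            + (∫ x in (⋃ j, Metric.ball (A j) δ')ᶜ, x ^ l * g k x) / Z k
            + ∑ j, A j ^ l *
                ((∫ x in Metric.ball (A j) δ', g k x) / Z k - q j k) := by
        rw [← hsplit, hsum1]
        have hs1 : ∑ j, A j ^ l * ((∫ x in Metric.ball (A j) δ', g k x) / Z k - q j k)
            = (∑ j, A j ^ l * ∫ x in Metric.ball (A j) δ', g k x) / Z k
              - ∑ j, A j ^ l * q j k := by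
          simp only [mul_sub, ← mul_div_assoc]
          rw [Finset.sum_sub_distrib, Finset.sum_div]
        rw [hs1, add_div, sub_div]
        ring
      have hT3 : |∑ j, A j ^ l *
          ((∫ x in Metric.ball (A j) δ', g k x) / Z k - q j k)|
          ≤ (r : ℝ) * R' ^ l * ((∫ x in (⋃ i, Metric.ball (A i) δ')ᶜ, g k x) / Z k) := by
        have hterm : ∀ j : Fin r, |A j ^ l *
            ((∫ x in Metric.ball (A j) δ', g k x) / Z k - q j k)|
            ≤ R' ^ l * ((∫ x in (⋃ i, Metric.ball (A i) δ')ᶜ, g k x) / Z k) := by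
          intro j
          have h0 := hO0 j
          have hAjR : |A j| ≤ R' := by linarith [hAR' j]
          have hAl : |A j ^ l| ≤ R' ^ l := by
            rw [abs_pow]
            exact pow_le_pow_left₀ (abs_nonneg _) hAjR l
          rw [abs_mul]
          have habs2 : |(∫ x in Metric.ball (A j) δ', g k x) / Z k - q j k|
              ≤ (∫ x in (⋃ i, Metric.ball (A i) δ')ᶜ, g k x) / Z k := by
            rw [abs_sub_comm, abs_of_nonneg h0.1]
            exact h0.2
          exact mul_le_mul hAl habs2 (abs_nonneg _) (pow_nonneg hR'pos.le l)
        calc |∑ j, A j ^ l *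
            ((∫ x in Metric.ball (A j) δ', g k x) / Z k - q j k)|
            ≤ ∑ j, |A j ^ l *
              ((∫ x in Metric.ball (A j) δ', g k x) / Z k - q j k)| :=
              Finset.abs_sum_le_sum_abs _ _
          _ ≤ ∑ _j : Fin r, R' ^ l * ((∫ x in (⋃ i, Metric.ball (A i) δ')ᶜ, g k x) / Z k) :=
              Finset.sum_le_sum (fun j _ => hterm j)
          _ = (r : ℝ) * R' ^ l * ((∫ x in (⋃ i, Metric.ball (A i) δ')ᶜ, g k x) / Z k) := by
              rw [Finset.sum_const, Finset.card_univ, Fintype.card_fin, nsmul_eq_mul]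
              ring
      have hT2 : |(∫ x in (⋃ j, Metric.ball (A j) δ')ᶜ, x ^ l * g k x) / Z k|
          ≤ (∫ x in (⋃ j, Metric.ball (A j) δ')ᶜ, |x| ^ l * g k x) / Z k := by
        have hb1 : |∫ x in (⋃ j, Metric.ball (A j) δ')ᶜ, x ^ l * g k x|
            ≤ ∫ x in (⋃ j, Metric.ball (A j) δ')ᶜ, |x| ^ l * g k x := by
          have he' : (fun x : ℝ => ‖x ^ l * g k x‖) = fun x => |x| ^ l * g k x :=
            funext fun x => by
              rw [Real.norm_eq_abs, abs_mul, abs_pow, abs_of_nonneg (hgpos k x).le]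
          calc |∫ x in (⋃ j, Metric.ball (A j) δ')ᶜ, x ^ l * g k x|
              = ‖∫ x in (⋃ j, Metric.ball (A j) δ')ᶜ, x ^ l * g k x‖ :=
                (Real.norm_eq_abs _).symm
            _ ≤ ∫ x in (⋃ j, Metric.ball (A j) δ')ᶜ, ‖x ^ l * g k x‖ :=
                norm_integral_le_integral_norm _
            _ = ∫ x in (⋃ j, Metric.ball (A j) δ')ᶜ, |x| ^ l * g k x := by rw [he']
        rw [abs_div, abs_of_pos hZk]
        exact (div_le_div_iff_of_pos_right hZk).mpr hb1
      have hT1' : |((∑ j, ∫ x in Metric.ball (A j) δ', x ^ l * g k x)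
          - ∑ j, A j ^ l * ∫ x in Metric.ball (A j) δ', g k x) / Z k| ≤ Cerr * δ' := by
        rw [abs_div, abs_of_pos hZk, div_le_iff₀ hZk]
        exact hT1
      have hsimp0 : (∫ x in (⋃ j, Metric.ball (A j) δ')ᶜ, |x| ^ 0 * g k x)
          = ∫ x in (⋃ i, Metric.ball (A i) δ')ᶜ, g k x := by
        simp
      rw [hiden, hsimp0]
      calc |((∑ j, ∫ x in Metric.ball (A j) δ', x ^ l * g k x)
              - ∑ j, A j ^ l * ∫ x in Metric.ball (A j) δ', g k x) / Z k
            + (∫ x in (⋃ j, Metric.ball (A j) δ')ᶜ, x ^ l * g k x) / Z k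
            + ∑ j, A j ^ l *
                ((∫ x in Metric.ball (A j) δ', g k x) / Z k - q j k)|
          ≤ |((∑ j, ∫ x in Metric.ball (A j) δ', x ^ l * g k x)
              - ∑ j, A j ^ l * ∫ x in Metric.ball (A j) δ', g k x) / Z k|
            + |(∫ x in (⋃ j, Metric.ball (A j) δ')ᶜ, x ^ l * g k x) / Z k|
            + |∑ j, A j ^ l *
                ((∫ x in Metric.ball (A j) δ', g k x) / Z k - q j k)| :=
            (abs_add_le _ _).trans (add_le_add_left (abs_add_le _ _) _)
        _ ≤ Cerr * δ'
            + (∫ x in (⋃ j, Metric.ball (A j) δ')ᶜ, |x| ^ l * g k x) / Z k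
            + (r : ℝ) * R' ^ l * ((∫ x in (⋃ i, Metric.ball (A i) δ')ᶜ, g k x) / Z k) :=
            add_le_add (add_le_add hT1' hT2) hT3
    -- now pass to the limit along the subsequence
    have hconc_l := conc δ' hδ'pos hδ'le l
    have hconc_0 := conc δ' hδ'pos hδ'le 0
    have hp0 : (0:ℝ) ≤ (r : ℝ) * R' ^ l :=
      mul_nonneg (Nat.cast_nonneg r) (pow_nonneg hR'pos.le l)
    have hu : (0:ℝ) < e / (8 * ((r : ℝ) * R' ^ l + 1)) := div_pos he (by linarith)
    have hev_l : ∀ᶠ k in atTop,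
        (∫ x in (⋃ j, Metric.ball (A j) δ')ᶜ, |x| ^ l * g k x) / Z k < e/8 :=
      hconc_l.eventually_lt_const (by linarith)
    have hev_0 : ∀ᶠ k in atTop,
        (∫ x in (⋃ j, Metric.ball (A j) δ')ᶜ, |x| ^ 0 * g k x) / Z k
          < e / (8 * ((r : ℝ) * R' ^ l + 1)) :=
      hconc_0.eventually_lt_const hu
    have hkey2 : ∀ᶠ k in atTop,
        |(∫ x : ℝ, x ^ l * g k x) / Z k - ∑ j, A j ^ l * q j k| < e/2 := by
      filter_upwards [key, hev_l, hev_0, hZpos] with k h1 h2 h3 h4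
      have hrat0 : (0:ℝ) ≤ (∫ x in (⋃ j, Metric.ball (A j) δ')ᶜ, |x| ^ 0 * g k x) / Z k :=
        div_nonneg (integral_nonneg fun x => mul_nonneg (by positivity) (hgpos k x).le)
          h4.2.2.le
      have hstep : (r : ℝ) * R' ^ l
            * ((∫ x in (⋃ j, Metric.ball (A j) δ')ᶜ, |x| ^ 0 * g k x) / Z k)
          ≤ (r : ℝ) * R' ^ l * (e / (8 * ((r : ℝ) * R' ^ l + 1))) :=
        mul_le_mul_of_nonneg_left h3.le hp0
      have hfrac : (r : ℝ) * R' ^ l * (e / (8 * ((r : ℝ) * R' ^ l + 1))) < e/8 := by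
        have hmu : (e / (8 * ((r : ℝ) * R' ^ l + 1))) * (8 * ((r : ℝ) * R' ^ l + 1)) = e :=
          div_mul_cancel₀ e (by linarith)
        nlinarith
      linarith
    have hsum2 : Tendsto (fun k => ∑ j, A j ^ l * q j (φ k)) atTop
        (𝓝 (∑ j, pw j * A j ^ l)) := by
      have h := tendsto_finset_sum (Finset.univ)
        (fun j (_ : j ∈ Finset.univ) => (hcoord j).const_mul (A j ^ l))
      have heq : (∑ j, A j ^ l * pw j) = ∑ j, pw j * A j ^ l :=
        Finset.sum_congr rfl fun j _ => mul_comm _ _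
      rw [heq] at h
      exact h
    have hev3 : ∀ᶠ k in atTop, |∑ j, A j ^ l * q j (φ k) - ∑ j, pw j * A j ^ l| < e/2 := by
      have h := Metric.tendsto_nhds.mp hsum2 (e/2) (by linarith)
      filter_upwards [h] with k hk
      rw [Real.dist_eq] at hk
      exact hk
    filter_upwards [hφ.tendsto_atTop.eventually hkey2, hev3] with k hk1 hk2
    rw [Real.dist_eq]
    calc |(∫ x : ℝ, x ^ l * g (φ k) x) / Z (φ k) - ∑ j, pw j * A j ^ l|
        ≤ |(∫ x : ℝ, x ^ l * g (φ k) x) / Z (φ k) - ∑ j, A j ^ l * q j (φ k)|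
          + |∑ j, A j ^ l * q j (φ k) - ∑ j, pw j * A j ^ l| := abs_sub_le _ _ _
      _ < e/2 + e/2 := add_lt_add hk1 hk2
      _ = e := by ring
  exact hfinal
end

section
/- Let (U_k) and U be infinitely differentiable functions from ℝ to ℝ such that for every i ∈ ℕ the i-th derivative U_k^{(i)} converges to U^{(i)} uniformly on every compact subset of ℝ as k → ∞. Assume U attains its global minimum exactly at the r points A₁ < ⋯ < A_r, and that there exist R > 0 and k_c such that U_k(x) > x² for all |x| > R and all k > k_c. Let I_j denote the Voronoï cell of A_j among {A₁, …, A_r} (the set of points at least as close to A_j as to any other A_i). Then for all sufficiently large k, U_k attains its infimum over I_j at some point, and for any choice of minimizers A_j^{(k)} ∈ argmin_{I_j} U_k one has A_j^{(k)} → A_j as k → ∞, for each 1 ≤ j ≤ r. -/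
open MeasureTheory Real Filter Topology

/-- The Voronoï cell of `A j` among the points `A i`. -/
def voronoiCell {r : ℕ} (A : Fin r → ℝ) (j : Fin r) : Set ℝ :=
  {y : ℝ | ∀ i, |y - A j| ≤ |y - A i|}

theorem stmt19
    (U : ℕ → ℝ → ℝ) (Ulim : ℝ → ℝ)
    (hUk : ∀ k, ContDiff ℝ (⊤ : ℕ∞) (U k)) (hUlim : ContDiff ℝ (⊤ : ℕ∞) Ulim)
    (hconv : ∀ i : ℕ, ∀ K : Set ℝ, IsCompact K →
      TendstoUniformlyOn (fun k => iteratedDeriv i (U k)) (iteratedDeriv i Ulim) atTop K)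
    (r : ℕ) (hr : 0 < r) (A : Fin r → ℝ) (hA : StrictMono A)
    (hmin : ∀ j x, Ulim (A j) ≤ Ulim x)
    (honly : ∀ x, (∀ y, Ulim x ≤ Ulim y) → ∃ j, x = A j)
    (R : ℝ) (hR : 0 < R) (kc : ℕ)
    (hgrowth : ∀ k > kc, ∀ x : ℝ, R < |x| → x ^ 2 < U k x) :
    ∀ j : Fin r,
      (∀ᶠ k in atTop, ∃ x ∈ voronoiCell A j, IsMinOn (U k) (voronoiCell A j) x) ∧
      ∀ B : ℕ → ℝ,
        (∀ᶠ k in atTop, B k ∈ voronoiCell A j ∧ IsMinOn (U k) (voronoiCell A j) (B k)) →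
        Tendsto B atTop (𝓝 (A j)) := by
  intro j
  set m := Ulim (A j) with hm
  have hcont : ∀ k, Continuous (U k) := fun k => (hUk k).continuous
  have hUlc : Continuous Ulim := hUlim.continuous
  have hVclosed : IsClosed (voronoiCell A j) := by
    have heq : voronoiCell A j = ⋂ i, {y : ℝ | |y - A j| ≤ |y - A i|} := by
      ext y; simp [voronoiCell, Set.mem_iInter]
    rw [heq]
    exact isClosed_iInter fun i =>
      isClosed_le ((continuous_id.sub continuous_const).abs)
        ((continuous_id.sub continuous_const).abs)
  have hAmem : A j ∈ voronoiCell A j := by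
    intro i; simp [abs_nonneg]
  -- the cutoff radius C
  set C : ℝ := max (max (R + 1) (|A j| + 1)) (Real.sqrt (|m| + 2)) with hC
  have hCR : R < C := lt_of_lt_of_le (by linarith) (le_trans (le_max_left _ _) (le_max_left _ _))
  have hCA : |A j| ≤ C := le_trans (by linarith) (le_trans (le_max_right _ _) (le_max_left _ _))
  have hC0 : 0 ≤ C := le_trans (abs_nonneg _) hCA
  have hC2 : |m| + 2 ≤ C ^ 2 := by
    have h1 : Real.sqrt (|m| + 2) ≤ C := le_max_right _ _
    have h2 : Real.sqrt (|m| + 2) ^ 2 = |m| + 2 := Real.sq_sqrt (by positivity)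
    nlinarith [Real.sqrt_nonneg (|m| + 2)]
  set K : Set ℝ := voronoiCell A j ∩ Set.Icc (-C) C with hK
  have hKc : IsCompact K := isCompact_Icc.inter_left hVclosed
  have hAK : A j ∈ K := ⟨hAmem, by
    rcases abs_le.mp hCA with ⟨h1, h2⟩
    exact ⟨h1, h2⟩⟩
  have huc : TendstoUniformlyOn U Ulim atTop K := by
    have := hconv 0 K hKc
    simpa [iteratedDeriv_zero] using this
  have hsup : ∀ δ > (0:ℝ), ∀ᶠ k in atTop, ∀ x ∈ K, |U k x - Ulim x| < δ := by
    intro δ hδ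
    filter_upwards [(Metric.tendstoUniformlyOn_iff.mp huc) δ hδ] with k hk x hx
    have := hk x hx
    rw [Real.dist_eq, abs_sub_comm] at this
    exact this
  -- membership in K for near-minimizers
  have hmemK : ∀ k x, kc < k → x ∈ voronoiCell A j → U k x ≤ U k (A j) →
      (∀ y ∈ K, |U k y - Ulim y| < 1) → x ∈ K := by
    intro k x hkc hxV hxle hk
    refine ⟨hxV, ?_⟩
    by_contra hxC
    have hxabs : C < |x| := by
      simp only [Set.mem_Icc, not_and_or, not_le] at hxC
      rcases hxC with h | h
      · exact lt_of_lt_of_le (by linarith : C < -x) (neg_le_abs x)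
      · exact lt_of_lt_of_le h (le_abs_self x)
    have h1 : x ^ 2 < U k x := hgrowth k hkc x (hCR.trans hxabs)
    have h2 : C ^ 2 < x ^ 2 := by
      have := pow_lt_pow_left₀ hxabs hC0 (two_ne_zero)
      rwa [sq_abs] at this
    have h4 := hk (A j) hAK
    rw [abs_lt] at h4
    have h5 : m ≤ |m| := le_abs_self m
    linarith
  -- existence of minimizers
  have hex : ∀ᶠ k in atTop, ∃ x ∈ voronoiCell A j, IsMinOn (U k) (voronoiCell A j) x := by
    filter_upwards [hsup 1 one_pos, eventually_gt_atTop kc] with k hk hkc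
    obtain ⟨x, hxK, hxmin⟩ := hKc.exists_isMinOn ⟨A j, hAK⟩ ((hcont k).continuousOn)
    refine ⟨x, hxK.1, ?_⟩
    intro y hy
    by_cases hyC : y ∈ Set.Icc (-C) C
    · exact hxmin ⟨hy, hyC⟩
    · have hyabs : C < |y| := by
        simp only [Set.mem_Icc, not_and_or, not_le] at hyC
        rcases hyC with h | h
        · exact lt_of_lt_of_le (by linarith : C < -y) (neg_le_abs y)
        · exact lt_of_lt_of_le h (le_abs_self y)
      have h1 : y ^ 2 < U k y := hgrowth k hkc y (hCR.trans hyabs)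
      have h2 : C ^ 2 < y ^ 2 := by
        have := pow_lt_pow_left₀ hyabs hC0 (two_ne_zero)
        rwa [sq_abs] at this
      have h3 : U k x ≤ U k (A j) := hxmin hAK
      have h4 := hk (A j) hAK
      rw [abs_lt] at h4
      have h5 : m ≤ |m| := le_abs_self m
      show U k x ≤ U k y
      linarith
  refine ⟨hex, ?_⟩
  intro B hB
  rw [Metric.tendsto_nhds]
  intro ε hε
  by_cases hK' : (K \ Metric.ball (A j) ε).Nonempty
  · -- the minimum of Ulim away from A j is strictly above m
    obtain ⟨x', hx'K', hx'min⟩ :=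
      (hKc.diff Metric.isOpen_ball).exists_isMinOn hK' hUlc.continuousOn
    have hm' : m < Ulim x' := by
      rcases lt_or_eq_of_le (hmin j x') with h | h
      · exact h
      · exfalso
        obtain ⟨i, hi⟩ := honly x' (fun y => h ▸ hmin j y)
        have hxj : x' = A j := by
          have h0 := hx'K'.1.1 i
          rw [hi] at h0 ⊢
          have : |A i - A j| ≤ 0 := by simpa using h0
          have : A i - A j = 0 := abs_eq_zero.mp (le_antisymm this (abs_nonneg _))
          linarith
        have := hx'K'.2
        rw [hxj] at this
        exact this (Metric.mem_ball_self hε)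
    set m' := Ulim x' with hm'def
    set δ : ℝ := min ((m' - m) / 3) 1 with hδdef
    have hδ0 : 0 < δ := lt_min (by linarith) one_pos
    have hδ1 : δ ≤ 1 := min_le_right _ _
    have hδ3 : 3 * δ ≤ m' - m := by
      have := min_le_left ((m' - m) / 3) 1
      linarith
    filter_upwards [hsup δ hδ0, eventually_gt_atTop kc, hB] with k hk hkc hBk
    obtain ⟨hBV, hBmin⟩ := hBk
    have hUle : U k (B k) ≤ U k (A j) := hBmin hAmem
    have hBK : B k ∈ K :=
      hmemK k (B k) hkc hBV hUle (fun y hy => lt_of_lt_of_le (hk y hy) hδ1)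
    by_contra hdist
    have hBK' : B k ∈ K \ Metric.ball (A j) ε := ⟨hBK, by
      simpa [Metric.mem_ball] using hdist⟩
    have h1 : m' ≤ Ulim (B k) := hx'min hBK'
    have h2 := hk (B k) hBK
    have h3 := hk (A j) hAK
    rw [abs_lt] at h2 h3
    linarith
  · -- K is contained in the ball
    rw [Set.not_nonempty_iff_eq_empty, Set.diff_eq_empty] at hK'
    filter_upwards [hsup 1 one_pos, eventually_gt_atTop kc, hB] with k hk hkc hBk
    obtain ⟨hBV, hBmin⟩ := hBk
    have hBK : B k ∈ K := hmemK k (B k) hkc hBV (hBmin hAmem) hk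
    simpa [Metric.mem_ball, Real.dist_eq] using hK' hBK
end
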